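/- arXiv:1705.07351 — 16 statements merged into one kernel-verified Lean document; each statement's English description precedes it below -/
import Mathlib

section
/- Suppose the sound ranging problem has a solution (s', t') (so t i = t' + ‖r i − s'‖ for all i ∈ ℕ) and the dual problem also has a solution (s'', t'') (so t i = t'' − ‖r i − s''‖ for all i ∈ ℕ). Then the solution of the sound ranging problem is unique: for any pair (s, τ) with t i = τ + ‖r i − s‖ for all i ∈ ℕ, one has s = s' and τ = t'. -/
/-!
The dual problem for `t` is the sound ranging problem for `-t`, and squaring turns a solution `x`
of the latter into the relation `⟪r i, x⟫ + t i * ‖x‖ = (‖r i‖ ^ 2 - t i ^ 2) / 2`, affine in `x`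
once `‖x‖` is fixed. Two sound ranging solutions of equal norm therefore coincide by density of
the sensors. Two solutions `x`, `y` of different norms make `t` linear, `t i = ⟪r i, u⟫`; then
`x`, `y` and the dual solution `z` lie on a line `p + ℝ u`, and the quadratic
`l ↦ ‖p - l • u‖ ^ 2 - l ^ 2` vanishes at `‖x‖ ≠ ‖y‖` and at `-‖z‖`, which forces `p = 0` and
`‖u‖ = 1`. Then `‖r i‖ = |⟪r i, u⟫|` puts every sensor on the line `ℝ u`, contradicting linear
independence.
-/

open RealInnerProductSpace Set Submodule

section InnerProductSpace

variable {ι E : Type*} [NormedAddCommGroup E] [InnerProductSpace ℝ E]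

theorem eq_of_inner_right_of_dense_span {f : ι → E} (hf : Dense (span ℝ (range f) : Set E))
    {x y : E} (h : ∀ i, ⟪f i, x⟫ = ⟪f i, y⟫) : x = y := by
  refine hf.eq_of_inner_right ℝ fun v hv => ?_
  induction hv using span_induction with
  | mem v hv => obtain ⟨i, rfl⟩ := hv; exact h i
  | zero => simp
  | add v w _ _ hv hw => rw [inner_add_left, inner_add_left, hv, hw]
  | smul c v _ hv => rw [real_inner_smul_left, real_inner_smul_left, hv]

theorem norm_sub_smul_sq (p u : E) (l : ℝ) :
    ‖p - l • u‖ ^ 2 = ‖p‖ ^ 2 - 2 * l * ⟪p, u⟫ + l ^ 2 * ‖u‖ ^ 2 := by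
  rw [norm_sub_sq_real, real_inner_smul_right, norm_smul, mul_pow, Real.norm_eq_abs, sq_abs]
  ring

theorem eq_inner_smul_of_norm_sq_eq_inner_sq {u v : E} (hu : ‖u‖ = 1)
    (h : ‖v‖ ^ 2 = ⟪v, u⟫ ^ 2) : v = ⟪v, u⟫ • u := by
  rw [← sub_eq_zero, ← norm_eq_zero, ← sq_eq_zero_iff, norm_sub_smul_sq, hu, h,
    real_inner_comm]
  ring

/-- `l ↦ ‖p - l • u‖ ^ 2 - l ^ 2` is a polynomial of degree at most two with the roots
`a ≠ b` and `-c`, where `a, b, c ≥ 0`. -/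
theorem eq_zero_and_norm_eq_one_of_norm_sub_smul_eq {p u : E} {a b c : ℝ} (hab : a ≠ b)
    (ha : ‖p - a • u‖ = a) (hb : ‖p - b • u‖ = b) (hc : ‖p + c • u‖ = c) :
    p = 0 ∧ ‖u‖ = 1 := by
  have ha0 : 0 ≤ a := ha ▸ norm_nonneg _
  have hb0 : 0 ≤ b := hb ▸ norm_nonneg _
  have hc0 : 0 ≤ c := hc ▸ norm_nonneg _
  have root : ∀ l, ‖p - l • u‖ = |l| → ‖p‖ ^ 2 - 2 * l * ⟪p, u⟫ + l ^ 2 * (‖u‖ ^ 2 - 1) = 0 := by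
    intro l hl
    linear_combination (norm_sub_smul_sq p u l).symm.trans (by rw [hl, sq_abs])
  have e1 := root a (by rw [ha, abs_of_nonneg ha0])
  have e2 := root b (by rw [hb, abs_of_nonneg hb0])
  have e3 := root (-c) (by rw [neg_smul, sub_neg_eq_add, hc, abs_neg, abs_of_nonneg hc0])
  set B := ⟪p, u⟫
  set C := ‖u‖ ^ 2 - 1
  have h2B : 2 * B = (a + b) * C := by
    have : (a - b) * (2 * B - (a + b) * C) = 0 := by linear_combination e2 - e1
    rcases mul_eq_zero.1 this with h | h
    · exact absurd (sub_eq_zero.1 h) hab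
    · linarith
  have hp : ‖p‖ ^ 2 = a * b * C := by linear_combination e1 + a * h2B
  have hC : C = 0 := by
    have hroots : C * ((a + c) * (b + c)) = 0 := by linear_combination e3 - hp - c * h2B
    rcases mul_eq_zero.1 hroots with h | h
    · exact h
    · have hab0 : a * b = 0 := by
        rcases mul_eq_zero.1 h with h | h
        · simp [show a = 0 by linarith]
        · simp [show b = 0 by linarith]
      have hB : B = 0 := by
        rw [hab0, zero_mul, sq_eq_zero_iff, norm_eq_zero] at hp
        simp [B, hp]
      have : a + b ≠ 0 := fun h' => hab (by nlinarith)
      simpa [hB, this] using h2B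
  rw [hC, mul_zero, sq_eq_zero_iff, norm_eq_zero] at hp
  exact ⟨hp, (pow_eq_one_iff_of_nonneg (norm_nonneg u) two_ne_zero).1 (by linarith)⟩

/-- Obtained by squaring `t i = ‖f i - x‖ - ‖x‖`. -/
def SquaredSRP (f : ι → E) (t : ι → ℝ) (x : E) : Prop :=
  ∀ i, ⟪f i, x⟫ + t i * ‖x‖ = (‖f i‖ ^ 2 - t i ^ 2) / 2

theorem inner_add_mul_norm_eq_of_eq_norm_sub_sub {r s : E} {t : ℝ} (h : t = ‖r - s‖ - ‖s‖) :
    ⟪r, s⟫ + t * ‖s‖ = (‖r‖ ^ 2 - t ^ 2) / 2 := by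
  have hsq : ‖r - s‖ ^ 2 = (t + ‖s‖) ^ 2 := by rw [h, sub_add_cancel]
  rw [norm_sub_sq_real] at hsq
  linear_combination -hsq / 2

theorem SquaredSRP.eq_of_neg [Infinite ι] {f : ι → E} (hli : LinearIndependent ℝ f)
    (hf : Dense (span ℝ (range f) : Set E)) {t : ι → ℝ} {x y z : E}
    (hx : SquaredSRP f t x) (hy : SquaredSRP f t y) (hz : SquaredSRP f (-t) z) : x = y := by
  simp only [SquaredSRP, Pi.neg_apply, neg_sq] at hz
  by_contra hxy
  have hnorm : ‖x‖ ≠ ‖y‖ := fun h =>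
    hxy (eq_of_inner_right_of_dense_span hf fun i => by linear_combination hx i - hy i - t i * h)
  set u := (‖y‖ - ‖x‖)⁻¹ • (x - y)
  have htu : ∀ i, t i = ⟪f i, u⟫ := by
    intro i
    rw [real_inner_smul_right, inner_sub_right, eq_inv_mul_iff_mul_eq₀ (sub_ne_zero.2 hnorm.symm)]
    linear_combination hy i - hx i
  set p := x + ‖x‖ • u
  have hinner_p : ∀ i, ⟪f i, p⟫ = (‖f i‖ ^ 2 - t i ^ 2) / 2 := fun i => by
    rw [inner_add_right, real_inner_smul_right, ← htu, ← hx i]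
    ring
  have hyp : y + ‖y‖ • u = p := eq_of_inner_right_of_dense_span hf fun i => by
    rw [hinner_p, inner_add_right, real_inner_smul_right, ← htu, ← hy i]
    ring
  have hzp : z - ‖z‖ • u = p := eq_of_inner_right_of_dense_span hf fun i => by
    rw [hinner_p, inner_sub_right, real_inner_smul_right, ← htu]
    linear_combination hz i
  obtain ⟨hp0, hu⟩ := eq_zero_and_norm_eq_one_of_norm_sub_smul_eq (p := p) (u := u) hnorm
    (by rw [add_sub_cancel_right]) (by rw [← hyp, add_sub_cancel_right])
    (by rw [← hzp, sub_add_cancel])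
  have hcol : ∀ i, f i = ⟪f i, u⟫ • u := fun i => by
    have hfi := hinner_p i
    rw [show p = 0 from hp0, inner_zero_right, htu] at hfi
    exact eq_inner_smul_of_norm_sq_eq_inner_sq hu (by linear_combination -2 * hfi)
  have : Finite ι := hli.finite_of_le_span_finite f {u} <|
    range_subset_iff.2 fun i => mem_span_singleton.2 ⟨_, (hcol i).symm⟩
  exact not_finite ι

end InnerProductSpace

section SoundRanging

variable {H : Type*} [NormedAddCommGroup H] {r : ℕ → H} {t : ℕ → ℝ} {s : H} {τ : ℝ}

theorem srp_time_eq_neg_norm (hr0 : r 0 = 0) (ht0 : t 0 = 0) (hs : ∀ i, t i = τ + ‖r i - s‖) :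
    τ = -‖s‖ := by
  have h0 := hs 0
  rw [hr0, ht0, zero_sub, norm_neg] at h0
  linarith

theorem squaredSRP_of_srp [InnerProductSpace ℝ H] (hr0 : r 0 = 0) (ht0 : t 0 = 0)
    (hs : ∀ i, t i = τ + ‖r i - s‖) :
    SquaredSRP (fun i => r (i + 1)) (fun i => t (i + 1)) s := fun i =>
  inner_add_mul_norm_eq_of_eq_norm_sub_sub (t := t (i + 1)) <| by
    rw [hs (i + 1), srp_time_eq_neg_norm hr0 ht0 hs]
    ring

end SoundRanging

theorem srp_unique_of_dual_solution_general
    {H : Type*} [NormedAddCommGroup H] [InnerProductSpace ℝ H]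
    (r : ℕ → H) (t : ℕ → ℝ)
    (hr0 : r 0 = 0) (ht0 : t 0 = 0)
    (hli : LinearIndependent ℝ (fun i : ℕ => r (i + 1)))
    (hdense : Dense (Submodule.span ℝ (Set.range fun i : ℕ => r (i + 1)) : Set H))
    (s' : H) (t' : ℝ) (hsol : ∀ i : ℕ, t i = t' + ‖r i - s'‖)
    (s'' : H) (t'' : ℝ) (hdual : ∀ i : ℕ, t i = t'' - ‖r i - s''‖) :
    ∀ (s : H) (τ : ℝ), (∀ i : ℕ, t i = τ + ‖r i - s‖) → s = s' ∧ τ = t' := by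
  intro s τ hs
  have hsrp_neg : ∀ i, -t i = -t'' + ‖r i - s''‖ := fun i => by rw [hdual]; ring
  have hss' : s = s' :=
    (squaredSRP_of_srp hr0 ht0 hs).eq_of_neg hli hdense (squaredSRP_of_srp hr0 ht0 hsol)
      (squaredSRP_of_srp hr0 (neg_eq_zero.2 ht0) hsrp_neg)
  exact ⟨hss', by rw [srp_time_eq_neg_norm hr0 ht0 hs, srp_time_eq_neg_norm hr0 ht0 hsol, hss']⟩

/-- If the sound ranging problem has a solution and the dual problem also has a
solution, then the solution of the sound ranging problem is unique. -/
theorem srp_unique_of_dual_solution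
    {H : Type*} [NormedAddCommGroup H] [InnerProductSpace ℝ H] [CompleteSpace H]
    (r : ℕ → H) (t : ℕ → ℝ)
    (hr0 : r 0 = 0) (ht0 : t 0 = 0)
    (hli : LinearIndependent ℝ (fun i : ℕ => r (i + 1)))
    (hdense : Dense (Submodule.span ℝ (Set.range fun i : ℕ => r (i + 1)) : Set H))
    (s' : H) (t' : ℝ) (hsol : ∀ i : ℕ, t i = t' + ‖r i - s'‖)
    (s'' : H) (t'' : ℝ) (hdual : ∀ i : ℕ, t i = t'' - ‖r i - s''‖) :
    ∀ (s : H) (τ : ℝ), (∀ i : ℕ, t i = τ + ‖r i - s‖) → s = s' ∧ τ = t' :=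
  srp_unique_of_dual_solution_general r t hr0 ht0 hli hdense s' t' hsol s'' t'' hdual
end

section
/- Suppose t i = ‖r i‖ for every i ∈ ℕ (i.e., the pair (0, 0): source at the sensor r 0 = 0 with emission time 0, is a solution of the sound ranging problem). Then this solution is unique: any pair (s, τ) with t i = τ + ‖r i − s‖ for all i ∈ ℕ satisfies s = 0 and τ = 0. -/
/-!
At the sensor `r 0 = 0` the equations give `τ = -‖s‖`, so every other equation reads
`‖r i - s‖ = ‖r i‖ + ‖s‖`: equality in the triangle inequality. In a strictly convex space this puts
every sensor on the ray of `-s`; for `s ≠ 0` two distinct sensors are then on the same ray,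
contradicting linear independence.
-/

open RealInnerProductSpace

theorem sameRay_neg_iff_norm_sub {E : Type*} [NormedAddCommGroup E] [NormedSpace ℝ E]
    [StrictConvexSpace ℝ E] {x y : E} : SameRay ℝ x (-y) ↔ ‖x - y‖ = ‖x‖ + ‖y‖ := by
  rw [sameRay_iff_norm_add, ← sub_eq_add_neg, norm_neg]

theorem LinearIndependent.not_sameRay {ι R M : Type*} [CommRing R] [LinearOrder R]
    [IsStrictOrderedRing R] [AddCommGroup M] [Module R M] [Module.IsTorsionFree R M] {f : ι → M}
    (hf : LinearIndependent R f) {i j : ι} (hij : i ≠ j) : ¬SameRay R (f i) (f j) := fun h =>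
  sameRay_or_sameRay_neg_iff_not_linearIndependent.mp (Or.inl h) <| by
    convert hf.comp ![i, j] ?_ using 1
    · ext k; fin_cases k <;> rfl
    · intro a b; fin_cases a <;> fin_cases b <;> simp [hij, hij.symm]

theorem srp_unique_of_source_at_sensor_general
    {H : Type*} [NormedAddCommGroup H] [InnerProductSpace ℝ H]
    (r : ℕ → H) (t : ℕ → ℝ)
    (hr0 : r 0 = 0)
    (hli : LinearIndependent ℝ (fun i : ℕ => r (i + 1)))
    (ht : ∀ i : ℕ, t i = ‖r i‖) :
    ∀ (s : H) (τ : ℝ), (∀ i : ℕ, t i = τ + ‖r i - s‖) → s = 0 ∧ τ = 0 := by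
  intro s τ h
  have hrange : ∀ i, ‖r i - s‖ = ‖r i‖ - τ := fun i => by linarith [h i, ht i]
  have hnorm : ‖s‖ = -τ := by simpa [hr0] using hrange 0
  have hs : s = 0 := by
    by_contra hs
    have hray : ∀ i, SameRay ℝ (r i) (-s) := fun i =>
      sameRay_neg_iff_norm_sub.mpr (by rw [hrange, hnorm, sub_eq_add_neg])
    exact hli.not_sameRay zero_ne_one
      ((hray 1).trans (hray 2).symm fun h0 => absurd (neg_eq_zero.mp h0) hs)
  exact ⟨hs, neg_eq_zero.mp (by simpa [hs] using hnorm.symm)⟩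

/-- If the source coincides with the sensor `r 0 = 0` (emission time `0`), this
solution of the sound ranging problem is unique. -/
theorem srp_unique_of_source_at_sensor
    {H : Type*} [NormedAddCommGroup H] [InnerProductSpace ℝ H] [CompleteSpace H]
    (r : ℕ → H) (t : ℕ → ℝ)
    (hr0 : r 0 = 0) (ht0 : t 0 = 0)
    (hli : LinearIndependent ℝ (fun i : ℕ => r (i + 1)))
    (hdense : Dense (Submodule.span ℝ (Set.range fun i : ℕ => r (i + 1)) : Set H))
    (ht : ∀ i : ℕ, t i = ‖r i‖) :
    ∀ (s : H) (τ : ℝ), (∀ i : ℕ, t i = τ + ‖r i - s‖) → s = 0 ∧ τ = 0 :=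
  srp_unique_of_source_at_sensor_general r t hr0 hli ht
end

section
/- Suppose there exist real constants 0 < λ ≤ μ and a strictly increasing sequence (n k)_{k ∈ ℕ} of indices with n k ≥ 1 such that for every k: ⟨r (n k), r i⟩ = 0 for all 1 ≤ i < n k, and λ ≤ ‖r (n k)‖ ≤ μ. Then the sound ranging problem has at most one solution: if (s', t') and (s'', t'') both satisfy t i = τ + ‖r i − s‖ for all i ∈ ℕ, then s' = s'' and t' = t''. -/
/-!
Since `r 0 = 0` and `t 0 = 0`, a solution `(s, τ)` has `τ = -‖s‖`, and squaring
`‖r i - s‖ = t i + ‖s‖` gives `t i ^ 2 + 2 t i ‖s‖ = ‖r i‖ ^ 2 - 2 ⟪r i, s⟫`.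
For two solutions `s', s''` this yields `⟪r i, s'' - s'⟫ = t i (‖s'‖ - ‖s''‖)`.
By Bessel's inequality the bounded orthogonal subsequence `r (n k)` tends weakly to `0`.
If `‖s'‖ ≠ ‖s''‖`, then `t (n k) → 0`, and the squared identity forces `‖r (n k)‖ → 0`,
against `‖r (n k)‖ ≥ λ`. Hence `‖s'‖ = ‖s''‖`, so `s'' - s'` is orthogonal to every sensor,
and the density of their span gives `s' = s''`.
-/

open RealInnerProductSpace Filter Topology Submodule Set

section InnerProductSpace

variable {H ι : Type*} [NormedAddCommGroup H] [InnerProductSpace ℝ H]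

theorem Orthonormal.tendsto_inner_cofinite_zero {v : ι → H} (hv : Orthonormal ℝ v) (x : H) :
    Tendsto (fun i => ⟪v i, x⟫) cofinite (𝓝 0) := by
  have hsq : Tendsto (fun i => ‖⟪v i, x⟫‖ ^ 2) cofinite (𝓝 0) :=
    (hv.inner_products_summable (x := x)).tendsto_cofinite_zero
  rw [tendsto_zero_iff_norm_tendsto_zero]
  simpa [Real.sqrt_sq_eq_abs] using hsq.sqrt

theorem orthonormal_normalize_of_pairwise_inner_eq_zero {v : ι → H}
    (hv : Pairwise fun i j => ⟪v i, v j⟫ = 0) (hv0 : ∀ i, v i ≠ 0) :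
    Orthonormal ℝ fun i => ‖v i‖⁻¹ • v i := by
  refine ⟨fun i => ?_, fun i j hij => ?_⟩
  · rw [norm_smul, norm_inv, norm_norm, inv_mul_cancel₀ (norm_ne_zero_iff.2 (hv0 i))]
  · simp only [real_inner_smul_left, real_inner_smul_right, hv hij, mul_zero]

theorem tendsto_inner_cofinite_zero_of_pairwise_inner_eq_zero {v : ι → H} {C : ℝ}
    (hv : Pairwise fun i j => ⟪v i, v j⟫ = 0) (hv0 : ∀ i, v i ≠ 0) (hC : ∀ i, ‖v i‖ ≤ C)
    (x : H) : Tendsto (fun i => ⟪v i, x⟫) cofinite (𝓝 0) := by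
  have hw :=
    (orthonormal_normalize_of_pairwise_inner_eq_zero hv hv0).tendsto_inner_cofinite_zero x
  have hscale : ∀ i, ⟪v i, x⟫ = ‖v i‖ * ⟪‖v i‖⁻¹ • v i, x⟫ := fun i => by
    rw [real_inner_smul_left, mul_inv_cancel_left₀ (norm_ne_zero_iff.2 (hv0 i))]
  simp only [hscale]
  exact isBoundedUnder_le_mul_tendsto_zero
    (isBoundedUnder_of ⟨C, fun i => by simpa using hC i⟩) hw

theorem eq_zero_of_dense_span_of_forall_inner_eq_zero {f : ι → H}
    (hf : Dense (span ℝ (range f) : Set H)) {x : H} (hx : ∀ i, ⟪f i, x⟫ = 0) : x = 0 :=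
  hf.eq_zero_of_inner_right ℝ fun _ hv =>
    mem_orthogonal_singleton_iff_inner_left.1 <| span_le.2
      (range_subset_iff.2 fun i => mem_orthogonal_singleton_iff_inner_left.2 (hx i)) hv

end InnerProductSpace

section SoundRanging

variable {H : Type*} [NormedAddCommGroup H]

def SolvesSRP (r : ℕ → H) (t : ℕ → ℝ) (s : H) (τ : ℝ) : Prop :=
  ∀ i, t i = τ + ‖r i - s‖

theorem SolvesSRP.eq_neg_norm {r : ℕ → H} {t : ℕ → ℝ} {s : H} {τ : ℝ}
    (h : SolvesSRP r t s τ) (hr0 : r 0 = 0) (ht0 : t 0 = 0) : τ = -‖s‖ := by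
  have h0 := h 0
  rw [hr0, ht0, zero_sub, norm_neg] at h0
  linarith

variable [InnerProductSpace ℝ H]

namespace SolvesSRP

variable {r : ℕ → H} {t : ℕ → ℝ} {s s' s'' : H} {τ τ' τ'' : ℝ}

theorem sq_add_two_mul_norm (h : SolvesSRP r t s τ) (hr0 : r 0 = 0) (ht0 : t 0 = 0) (i : ℕ) :
    t i ^ 2 + 2 * t i * ‖s‖ = ‖r i‖ ^ 2 - 2 * ⟪r i, s⟫ := by
  have hdist : ‖r i - s‖ = t i + ‖s‖ := by rw [h i, h.eq_neg_norm hr0 ht0]; ring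
  have hsq := norm_sub_sq_real (r i) s
  rw [hdist] at hsq
  linear_combination hsq

theorem inner_sub_eq (h' : SolvesSRP r t s' τ') (h'' : SolvesSRP r t s'' τ'')
    (hr0 : r 0 = 0) (ht0 : t 0 = 0) (i : ℕ) :
    ⟪r i, s'' - s'⟫ = t i * (‖s'‖ - ‖s''‖) := by
  rw [inner_sub_right]
  linear_combination
    (h''.sq_add_two_mul_norm hr0 ht0 i - h'.sq_add_two_mul_norm hr0 ht0 i) / 2

theorem norm_eq_norm (h' : SolvesSRP r t s' τ') (h'' : SolvesSRP r t s'' τ'')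
    (hr0 : r 0 = 0) (ht0 : t 0 = 0) {n : ℕ → ℕ} {lam : ℝ}
    (hweak : ∀ x, Tendsto (fun k => ⟪r (n k), x⟫) atTop (𝓝 0))
    (hlam : 0 < lam) (hnorm : ∀ k, lam ≤ ‖r (n k)‖) : ‖s'‖ = ‖s''‖ := by
  by_contra hne
  have ht : Tendsto (fun k => t (n k)) atTop (𝓝 0) := by
    simpa [h'.inner_sub_eq h'' hr0 ht0, mul_div_cancel_right₀ _ (sub_ne_zero.2 hne)] using
      (hweak (s'' - s')).div_const (‖s'‖ - ‖s''‖)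
  have hr : Tendsto (fun k => ‖r (n k)‖ ^ 2) atTop (𝓝 0) := by
    have hsum := (ht.pow 2).add ((ht.mul_const (2 * ‖s'‖)).add ((hweak s').const_mul 2))
    convert hsum using 2 with k
    · linear_combination -h'.sq_add_two_mul_norm hr0 ht0 (n k)
    · simp
  have hlam_sq : lam ^ 2 ≤ 0 :=
    ge_of_tendsto' hr fun k => pow_le_pow_left₀ hlam.le (hnorm k) 2
  exact absurd hlam_sq (not_le.2 (pow_pos hlam 2))

end SolvesSRP

end SoundRanging

theorem srp_unique_of_orthogonal_subsequence_general
    {H : Type*} [NormedAddCommGroup H] [InnerProductSpace ℝ H]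
    (r : ℕ → H) (t : ℕ → ℝ)
    (hr0 : r 0 = 0) (ht0 : t 0 = 0)
    (hdense : Dense (Submodule.span ℝ (Set.range fun i : ℕ => r (i + 1)) : Set H))
    (lam mu : ℝ) (hlam : 0 < lam)
    (n : ℕ → ℕ) (hmono : StrictMono n) (hn1 : ∀ k : ℕ, 1 ≤ n k)
    (horth : ∀ k : ℕ, ∀ i : ℕ, 1 ≤ i → i < n k → ⟪r (n k), r i⟫ = 0)
    (hnorm : ∀ k : ℕ, lam ≤ ‖r (n k)‖ ∧ ‖r (n k)‖ ≤ mu)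
    (s' : H) (t' : ℝ) (hsol' : ∀ i : ℕ, t i = t' + ‖r i - s'‖)
    (s'' : H) (t'' : ℝ) (hsol'' : ∀ i : ℕ, t i = t'' + ‖r i - s''‖) :
    s' = s'' ∧ t' = t'' := by
  have h' : SolvesSRP r t s' t' := hsol'
  have h'' : SolvesSRP r t s'' t'' := hsol''
  have hpair : Pairwise fun j k => ⟪r (n j), r (n k)⟫ = 0 := by
    intro j k hjk
    rcases hjk.lt_or_gt with hjk | hkj
    · rw [real_inner_comm]
      exact horth k (n j) (hn1 j) (hmono hjk)
    · exact horth j (n k) (hn1 k) (hmono hkj)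
  have hweak : ∀ x, Tendsto (fun k => ⟪r (n k), x⟫) atTop (𝓝 0) := fun x => by
    rw [← Nat.cofinite_eq_atTop]
    exact tendsto_inner_cofinite_zero_of_pairwise_inner_eq_zero hpair
      (fun k => norm_pos_iff.1 (hlam.trans_le (hnorm k).1)) (fun k => (hnorm k).2) x
  have hnorm_eq := h'.norm_eq_norm h'' hr0 ht0 hweak hlam fun k => (hnorm k).1
  have hdiff : s'' - s' = 0 :=
    eq_zero_of_dense_span_of_forall_inner_eq_zero hdense fun i => by
      rw [h'.inner_sub_eq h'' hr0 ht0, hnorm_eq, sub_self, mul_zero]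
  refine ⟨(sub_eq_zero.1 hdiff).symm, ?_⟩
  rw [h'.eq_neg_norm hr0 ht0, h''.eq_neg_norm hr0 ht0, hnorm_eq]

/-- If a subsequence of the sensors is orthogonal to all preceding sensors and has
norms bounded between `0 < λ ≤ μ`, then the sound ranging problem has at most one
solution. -/
theorem srp_unique_of_orthogonal_subsequence
    {H : Type*} [NormedAddCommGroup H] [InnerProductSpace ℝ H] [CompleteSpace H]
    (r : ℕ → H) (t : ℕ → ℝ)
    (hr0 : r 0 = 0) (ht0 : t 0 = 0)
    (hli : LinearIndependent ℝ (fun i : ℕ => r (i + 1)))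
    (hdense : Dense (Submodule.span ℝ (Set.range fun i : ℕ => r (i + 1)) : Set H))
    (lam mu : ℝ) (hlam : 0 < lam) (hlammu : lam ≤ mu)
    (n : ℕ → ℕ) (hmono : StrictMono n) (hn1 : ∀ k : ℕ, 1 ≤ n k)
    (horth : ∀ k : ℕ, ∀ i : ℕ, 1 ≤ i → i < n k → ⟪r (n k), r i⟫ = 0)
    (hnorm : ∀ k : ℕ, lam ≤ ‖r (n k)‖ ∧ ‖r (n k)‖ ≤ mu)
    (s' : H) (t' : ℝ) (hsol' : ∀ i : ℕ, t i = t' + ‖r i - s'‖)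
    (s'' : H) (t'' : ℝ) (hsol'' : ∀ i : ℕ, t i = t'' + ‖r i - s''‖) :
    s' = s'' ∧ t' = t'' :=
  srp_unique_of_orthogonal_subsequence_general r t hr0 ht0 hdense lam mu hlam n hmono hn1 horth
    hnorm s' t' hsol' s'' t'' hsol''
end

section
/- Extend the sensor set by the additional sensor −r 1 with arrival time t_ω ∈ ℝ. Then the extended sound ranging problem has at most one solution: if (s', t') and (s'', t'') both satisfy t i = τ + ‖r i − s‖ for all i ∈ ℕ together with t_ω = τ + ‖(−r 1) − s‖, then s' = s'' and t' = t''. -/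
open RealInnerProductSpace

/-!
Since `r 0 = 0` and `t 0 = 0`, every solution has `τ = -‖s‖`, and squaring
`‖r i - s‖ = t i + ‖s‖` makes each sensor equation affine in the pair `(s, ‖s‖)`.
Two solutions with `‖s'‖ = ‖s''‖` therefore differ by a vector orthogonal to every sensor,
hence to a dense subspace, so they coincide. If `‖s'‖ ≠ ‖s''‖`, subtracting the equations at
`r 1` and `-r 1` forces `t_ω = -t 1`; adding the squared equations for this antipodal pair then
gives `(t 1)² = ‖r 1‖²`, i.e. equality in Cauchy–Schwarz, so both solutions lie on one ray
`ℝ≥0 • e`. Comparing the two solutions along that ray shows that every sensor is a multiple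
of `e`, contradicting the linear independence of `r 1` and `r 2`.
-/

section SoundRanging

variable {H : Type*} [NormedAddCommGroup H] [InnerProductSpace ℝ H]

theorem norm_sq_sub_two_inner_of_norm_sub_eq {r s : H} {t : ℝ} (h : ‖r - s‖ = t + ‖s‖) :
    ‖r‖ ^ 2 - 2 * ⟪r, s⟫ = t ^ 2 + 2 * t * ‖s‖ := by
  have hsq := norm_sub_sq_real r s
  rw [h] at hsq
  linear_combination -hsq

theorem inner_sub_of_norm_sub_eq {r s₁ s₂ : H} {t : ℝ}
    (h₁ : ‖r - s₁‖ = t + ‖s₁‖) (h₂ : ‖r - s₂‖ = t + ‖s₂‖) :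
    ⟪r, s₁ - s₂⟫ = -t * (‖s₁‖ - ‖s₂‖) := by
  rw [inner_sub_right]
  linear_combination (norm_sq_sub_two_inner_of_norm_sub_eq h₂ -
    norm_sq_sub_two_inner_of_norm_sub_eq h₁) / 2

theorem eq_of_norm_eq_of_dense_span {ι : Type*} {v : ι → H} {t : ι → ℝ}
    (hdense : Dense (Submodule.span ℝ (Set.range v) : Set H)) {s₁ s₂ : H}
    (h₁ : ∀ i, ‖v i - s₁‖ = t i + ‖s₁‖) (h₂ : ∀ i, ‖v i - s₂‖ = t i + ‖s₂‖)
    (hnorm : ‖s₁‖ = ‖s₂‖) : s₁ = s₂ := by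
  have hortho : Submodule.span ℝ (Set.range v) ⟂ Submodule.span ℝ {s₁ - s₂} := by
    rw [Submodule.isOrtho_span]
    rintro _ ⟨i, rfl⟩ _ rfl
    rw [inner_sub_of_norm_sub_eq (h₁ i) (h₂ i), hnorm, sub_self, mul_zero]
  exact sub_eq_zero.mp <| hdense.eq_zero_of_inner_right ℝ fun _ hw =>
    hortho.inner_eq hw (Submodule.mem_span_singleton_self _)

theorem eq_smul_of_inner_eq_of_norm_sq_eq {x e : H} {c : ℝ} (he : ‖e‖ = 1)
    (hinner : ⟪x, e⟫ = c) (hnorm : ‖x‖ ^ 2 = c ^ 2) : x = c • e := by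
  have hsq : ‖x - c • e‖ ^ 2 = 0 := by
    rw [norm_sub_sq_real, real_inner_smul_right, norm_smul, mul_pow, Real.norm_eq_abs, sq_abs,
      hinner, hnorm, he]
    ring
  exact sub_eq_zero.mp (norm_eq_zero.mp (pow_eq_zero_iff two_ne_zero |>.mp hsq))

theorem neg_eq_of_norm_sub_eq_of_norm_neg_sub_eq {r s₁ s₂ : H} {t t' : ℝ} (hne : ‖s₁‖ ≠ ‖s₂‖)
    (h₁ : ‖r - s₁‖ = t + ‖s₁‖) (h₂ : ‖r - s₂‖ = t + ‖s₂‖)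
    (h₁' : ‖-r - s₁‖ = t' + ‖s₁‖) (h₂' : ‖-r - s₂‖ = t' + ‖s₂‖) : t' = -t := by
  have hr := inner_sub_of_norm_sub_eq h₁ h₂
  have hr' := inner_sub_of_norm_sub_eq h₁' h₂'
  rw [inner_neg_left] at hr'
  have hprod : (t' + t) * (‖s₁‖ - ‖s₂‖) = 0 := by linear_combination hr + hr'
  linarith [(mul_eq_zero.mp hprod).resolve_right (sub_ne_zero.mpr hne)]

theorem sq_eq_norm_sq_and_inner_eq_of_antipodal {r s : H} {t : ℝ}
    (h : ‖r - s‖ = t + ‖s‖) (h' : ‖-r - s‖ = -t + ‖s‖) :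
    t ^ 2 = ‖r‖ ^ 2 ∧ ⟪r, s⟫ = -t * ‖s‖ := by
  have E := norm_sq_sub_two_inner_of_norm_sub_eq h
  have E' := norm_sq_sub_two_inner_of_norm_sub_eq h'
  rw [norm_neg, inner_neg_left] at E'
  exact ⟨by linear_combination -(E + E') / 2, by linear_combination (E' - E) / 4⟩

theorem exists_unit_eq_norm_smul_of_antipodal {r s₁ s₂ : H} {t t' : ℝ} (hr : r ≠ 0)
    (hne : ‖s₁‖ ≠ ‖s₂‖) (h₁ : ‖r - s₁‖ = t + ‖s₁‖) (h₂ : ‖r - s₂‖ = t + ‖s₂‖)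
    (h₁' : ‖-r - s₁‖ = t' + ‖s₁‖) (h₂' : ‖-r - s₂‖ = t' + ‖s₂‖) :
    ∃ e : H, ‖e‖ = 1 ∧ s₁ = ‖s₁‖ • e ∧ s₂ = ‖s₂‖ • e := by
  obtain rfl := neg_eq_of_norm_sub_eq_of_norm_neg_sub_eq hne h₁ h₂ h₁' h₂'
  obtain ⟨hsq, hinner₁⟩ := sq_eq_norm_sq_and_inner_eq_of_antipodal h₁ h₁'
  have hinner₂ := (sq_eq_norm_sq_and_inner_eq_of_antipodal h₂ h₂').2
  have ht : t ≠ 0 := by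
    rintro rfl
    exact hr (by simpa [eq_comm] using hsq)
  have hnorm : ‖r‖ = |t| := by
    rw [← sq_eq_sq₀ (norm_nonneg _) (abs_nonneg _), sq_abs, hsq]
  have he : ‖-t⁻¹ • r‖ = 1 := by
    rw [norm_smul, norm_neg, norm_inv, Real.norm_eq_abs, hnorm, inv_mul_cancel₀ (abs_ne_zero.mpr ht)]
  have hray : ∀ {s : H}, ⟪r, s⟫ = -t * ‖s‖ → s = ‖s‖ • (-t⁻¹ • r) := fun hinner =>
    eq_smul_of_inner_eq_of_norm_sq_eq he
      (by rw [real_inner_smul_right, real_inner_comm, hinner]; field_simp) rfl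
  exact ⟨_, he, hray hinner₁, hray hinner₂⟩

theorem eq_neg_smul_of_norm_sub_eq_of_eq_norm_smul {r e s₁ s₂ : H} {t : ℝ} (he : ‖e‖ = 1)
    (hs₁ : s₁ = ‖s₁‖ • e) (hs₂ : s₂ = ‖s₂‖ • e) (hne : ‖s₁‖ ≠ ‖s₂‖)
    (h₁ : ‖r - s₁‖ = t + ‖s₁‖) (h₂ : ‖r - s₂‖ = t + ‖s₂‖) : r = -t • e := by
  have hinner : ∀ {s : H}, s = ‖s‖ • e → ⟪r, s⟫ = ‖s‖ * ⟪r, e⟫ := fun hs => by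
    rw [← real_inner_smul_right, ← hs]
  have E₁ := norm_sq_sub_two_inner_of_norm_sub_eq h₁
  have E₂ := norm_sq_sub_two_inner_of_norm_sub_eq h₂
  rw [hinner hs₁] at E₁
  rw [hinner hs₂] at E₂
  have hre : ⟪r, e⟫ = -t :=
    mul_left_cancel₀ (sub_ne_zero.mpr hne) (by linear_combination (E₂ - E₁) / 2)
  exact eq_smul_of_inner_eq_of_norm_sq_eq he hre (by linear_combination E₁ + 2 * ‖s₁‖ * hre)

end SoundRanging

theorem LinearIndependent.ne_smul_of_eq_smul {ι K V : Type*} [Field K] [AddCommGroup V]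
    [Module K V] {v : ι → V} (hv : LinearIndependent K v) {i j : ι} (hij : i ≠ j) {e : V}
    {a b : K} (hi : v i = a • e) : v j ≠ b • e := by
  intro hj
  have ha : a ≠ 0 := by
    rintro rfl
    exact hv.ne_zero i (by rw [hi, zero_smul])
  refine (linearIndepOn_pair_iff v hij (hv.ne_zero i)).mp (hv.linearIndepOn _) (b / a) ?_
  rw [hi, hj, smul_smul, div_mul_cancel₀ _ ha]

theorem srp_unique_of_extension_general
    {H : Type*} [NormedAddCommGroup H] [InnerProductSpace ℝ H]
    (r : ℕ → H) (t : ℕ → ℝ) (tω : ℝ)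
    (hr0 : r 0 = 0) (ht0 : t 0 = 0)
    (hli : LinearIndependent ℝ (fun i : ℕ => r (i + 1)))
    (hdense : Dense (Submodule.span ℝ (Set.range fun i : ℕ => r (i + 1)) : Set H))
    (s' : H) (t' : ℝ)
    (hsol' : ∀ i : ℕ, t i = t' + ‖r i - s'‖)
    (hsol'ω : tω = t' + ‖(-(r 1)) - s'‖)
    (s'' : H) (t'' : ℝ)
    (hsol'' : ∀ i : ℕ, t i = t'' + ‖r i - s''‖)
    (hsol''ω : tω = t'' + ‖(-(r 1)) - s''‖) :
    s' = s'' ∧ t' = t'' := by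
  have hτ : ∀ {s : H} {τ : ℝ}, (∀ i, t i = τ + ‖r i - s‖) → τ = -‖s‖ := fun hsol => by
    simpa [hr0, ht0, eq_neg_iff_add_eq_zero] using (hsol 0).symm
  have h' : ∀ i, ‖r i - s'‖ = t i + ‖s'‖ := fun i => by linarith [hsol' i, hτ hsol']
  have h'' : ∀ i, ‖r i - s''‖ = t i + ‖s''‖ := fun i => by linarith [hsol'' i, hτ hsol'']
  have hnorm : ‖s'‖ = ‖s''‖ := by
    by_contra hne
    obtain ⟨e, he, hs', hs''⟩ := exists_unit_eq_norm_smul_of_antipodal (t' := tω) (hli.ne_zero 0) hne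
      (h' 1) (h'' 1) (by linarith [hτ hsol']) (by linarith [hτ hsol''])
    exact hli.ne_smul_of_eq_smul zero_ne_one
      (eq_neg_smul_of_norm_sub_eq_of_eq_norm_smul he hs' hs'' hne (h' 1) (h'' 1))
      (eq_neg_smul_of_norm_sub_eq_of_eq_norm_smul he hs' hs'' hne (h' 2) (h'' 2))
  exact ⟨eq_of_norm_eq_of_dense_span hdense (fun i => h' (i + 1)) (fun i => h'' (i + 1)) hnorm,
    by rw [hτ hsol', hτ hsol'', hnorm]⟩

/-- Extending the sensor set by the additional sensor `-(r 1)`, the extended sound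
ranging problem has at most one solution. -/
theorem srp_unique_of_extension
    {H : Type*} [NormedAddCommGroup H] [InnerProductSpace ℝ H] [CompleteSpace H]
    (r : ℕ → H) (t : ℕ → ℝ) (tω : ℝ)
    (hr0 : r 0 = 0) (ht0 : t 0 = 0)
    (hli : LinearIndependent ℝ (fun i : ℕ => r (i + 1)))
    (hdense : Dense (Submodule.span ℝ (Set.range fun i : ℕ => r (i + 1)) : Set H))
    (s' : H) (t' : ℝ)
    (hsol' : ∀ i : ℕ, t i = t' + ‖r i - s'‖)
    (hsol'ω : tω = t' + ‖(-(r 1)) - s'‖)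
    (s'' : H) (t'' : ℝ)
    (hsol'' : ∀ i : ℕ, t i = t'' + ‖r i - s''‖)
    (hsol''ω : tω = t'' + ‖(-(r 1)) - s''‖) :
    s' = s'' ∧ t' = t'' :=
  srp_unique_of_extension_general r t tω hr0 ht0 hli hdense s' t' hsol' hsol'ω s'' t'' hsol''
    hsol''ω
end

section
/- Suppose (s', t') solves the sound ranging problem (t i = t' + ‖r i − s'‖ for all i ∈ ℕ), and (s'', t'') ≠ (s', t') is a pair satisfying the implied set of equations (t i − t'')² = ‖r i − s''‖² for all i ∈ ℕ. Then (s'', t'') is either a solution of the sound ranging problem (t i = t'' + ‖r i − s''‖ for all i ∈ ℕ) or a solution of the dual problem (t i = t'' − ‖r i − s''‖ for all i ∈ ℕ); no 'mixed' sign pattern is possible. -/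
/-!
Suppose the implied equations had mixed signs: some sensor `r a` on the dual branch
(`t a = t'' - ‖r a - s''‖`, `r a ≠ s''`) and some sensor `r b` on the SRP branch. Because
`t` is realised by the true source `s'`, arrival-time differences are bounded by sensor
distances, so for any dual-branch sensor `x` and SRP-branch sensor `y` the triangle inequality
`‖x - s''‖ + ‖s'' - y‖ ≥ ‖x - y‖` becomes an equality and `s''` lies on the segment `[x, y]`.
Pairing every sensor with `r a` or `r b` puts all sensors on the line through `s''` and `r a`,
which is impossible for three linearly independent sensors.
-/

open RealInnerProductSpace

section Collinearity

variable {k V P : Type*} [Field k] [AddCommGroup V] [Module k V] [AddTorsor V P]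

theorem mem_affineSpan_pair_of_wbtw_or_wbtw [LinearOrder k] {a b s p : P} (hab : Wbtw k a s b)
    (has : a ≠ s) (hbs : b ≠ s) (hp : Wbtw k a s p ∨ Wbtw k p s b) : p ∈ line[k, s, a] := by
  have hb : b ∈ line[k, s, a] :=
    hab.collinear.mem_affineSpan_of_mem_of_ne (by simp) (by simp) (by simp) has.symm
  rcases hp with hp | hp
  · exact hp.collinear.mem_affineSpan_of_mem_of_ne (by simp) (by simp) (by simp) has.symm
  · exact affineSpan_pair_le_of_mem_of_mem (left_mem_affineSpan_pair k s a) hb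
      (hp.collinear.mem_affineSpan_of_mem_of_ne (by simp) (by simp) (by simp) hbs.symm)

theorem LinearIndependent.not_collinear_triple {ι : Type*} {v : ι → V}
    (hv : LinearIndependent k v) {i j l : ι} (hij : i ≠ j) (hil : i ≠ l) (hjl : j ≠ l) :
    ¬Collinear k ({v i, v j, v l} : Set V) := by
  have hinj : Function.Injective ![i, j, l] := by
    intro x y hxy
    fin_cases x <;> fin_cases y <;> simp_all [eq_comm]
  rw [← affineIndependent_iff_not_collinear_set]
  convert (hv.comp _ hinj).affineIndependent using 1
  ext x
  fin_cases x <;> rfl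

end Collinearity

section SoundRanging

variable {E : Type*} [NormedAddCommGroup E] [NormedSpace ℝ E] [StrictConvexSpace ℝ E]

theorem wbtw_of_dual_of_srp {x y s s' : E} {tx ty τ τ' : ℝ}
    (hx' : tx = τ' + ‖x - s'‖) (hy' : ty = τ' + ‖y - s'‖)
    (hx : tx = τ - ‖x - s‖) (hy : ty = τ + ‖y - s‖) : Wbtw ℝ x s y := by
  refine dist_add_dist_eq_iff.mp (le_antisymm ?_ (dist_triangle x s y))
  calc dist x s + dist s y = ty - tx := by rw [dist_eq_norm, dist_eq_norm']; linarith
    _ = ‖y - s'‖ - ‖x - s'‖ := by linarith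
    _ ≤ ‖(y - s') - (x - s')‖ := norm_sub_norm_le _ _
    _ = dist x y := by rw [sub_sub_sub_cancel_right, dist_eq_norm']

end SoundRanging

theorem srp_implied_solution_not_mixed_general
    {H : Type*} [NormedAddCommGroup H] [InnerProductSpace ℝ H]
    (r : ℕ → H) (t : ℕ → ℝ)
    (hli : LinearIndependent ℝ (fun i : ℕ => r (i + 1)))
    (s' : H) (t' : ℝ) (hsol : ∀ i : ℕ, t i = t' + ‖r i - s'‖)
    (s'' : H) (t'' : ℝ)
    (himp : ∀ i : ℕ, (t i - t'') ^ 2 = ‖r i - s''‖ ^ 2) :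
    (∀ i : ℕ, t i = t'' + ‖r i - s''‖) ∨ (∀ i : ℕ, t i = t'' - ‖r i - s''‖) := by
  have hbranch : ∀ i, t i = t'' + ‖r i - s''‖ ∨ t i = t'' - ‖r i - s''‖ := fun i => by
    rcases sq_eq_sq_iff_eq_or_eq_neg.mp (himp i) with h | h
    exacts [.inl (by linarith), .inr (by linarith)]
  by_contra! ⟨⟨a, ha⟩, ⟨b, hb⟩⟩
  have ha' : t a = t'' - ‖r a - s''‖ := (hbranch a).resolve_left ha
  have hb' : t b = t'' + ‖r b - s''‖ := (hbranch b).resolve_right hb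
  have has : r a ≠ s'' := fun h => ha (by simpa [h] using ha')
  have hbs : r b ≠ s'' := fun h => hb (by simpa [h] using hb')
  have hline : ∀ i, r i ∈ line[ℝ, s'', r a] := fun i =>
    mem_affineSpan_pair_of_wbtw_or_wbtw (wbtw_of_dual_of_srp (hsol a) (hsol b) ha' hb') has hbs
      ((hbranch i).imp (wbtw_of_dual_of_srp (hsol a) (hsol i) ha')
        (wbtw_of_dual_of_srp (hsol i) (hsol b) · hb'))
  exact hli.not_collinear_triple (i := 0) (j := 1) (l := 2) (by decide) (by decide) (by decide)
    (collinear_triple_of_mem_affineSpan_pair (hline 1) (hline 2) (hline 3))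

/-- If the sound ranging problem has a solution, any other solution of the implied
set of equations is either a solution of the SRP or of the dual problem; no mixed
sign pattern is possible. -/
theorem srp_implied_solution_not_mixed
    {H : Type*} [NormedAddCommGroup H] [InnerProductSpace ℝ H] [CompleteSpace H]
    (r : ℕ → H) (t : ℕ → ℝ)
    (hr0 : r 0 = 0) (ht0 : t 0 = 0)
    (hli : LinearIndependent ℝ (fun i : ℕ => r (i + 1)))
    (hdense : Dense (Submodule.span ℝ (Set.range fun i : ℕ => r (i + 1)) : Set H))
    (s' : H) (t' : ℝ) (hsol : ∀ i : ℕ, t i = t' + ‖r i - s'‖)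
    (s'' : H) (t'' : ℝ) (hne : (s'', t'') ≠ (s', t'))
    (himp : ∀ i : ℕ, (t i - t'') ^ 2 = ‖r i - s''‖ ^ 2) :
    (∀ i : ℕ, t i = t'' + ‖r i - s''‖) ∨ (∀ i : ℕ, t i = t'' - ‖r i - s''‖) :=
  srp_implied_solution_not_mixed_general r t hli s' t' hsol s'' t'' himp
end

section
/- If the sound ranging problem in H has a solution (some (s, τ) with t i = τ + ‖r i − s‖ for all i ∈ ℕ), then for every n ≥ 1 the downdimensioned problem SRP_n has a solution: there exist sₙ in the linear span of {r 1, …, r n} and τₙ ∈ ℝ such that t i = τₙ + ‖r i − sₙ‖ for all 0 ≤ i ≤ n. -/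
/-!
Because `r 0 = 0` and `t 0 = 0`, a solution `(s, τ)` has `‖s‖ = -τ`, and given this,
`t i = τ + ‖r i - s‖` amounts to `τ ≤ t i` together with the linear condition
`2 ⟪r i, s⟫ = ‖r i‖² - t i² + 2 t i τ`. Inside the span `V` of `r 1, …, r n` these linear
conditions, for a parameter `c` in place of `τ`, are solved by a line `c ↦ x₀ + c • w`, and it
remains to find `c ≤ min (0, t 1, …, t n)` with `‖x₀ + c • w‖ = -c`. At `c = τ` the point
`x₀ + τ • w` is the orthogonal projection of `s` onto `V`, so its norm is at most `‖s‖ = -τ`; at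
`c = min (0, t 1, …, t n)` Cauchy–Schwarz gives the reverse inequality, and the intermediate value
theorem provides `c`.
-/

open RealInnerProductSpace

section

open Submodule Set

variable {H : Type*} [NormedAddCommGroup H] [InnerProductSpace ℝ H]

theorem LinearIndependent.exists_mem_span_inner_eq {ι : Type*} [Finite ι] {u : ι → H}
    (hu : LinearIndependent ℝ u) (c : ι → ℝ) :
    ∃ x ∈ span ℝ (range u), ∀ j, ⟪u j, x⟫ = c j := by
  let b := Module.Basis.span hu
  have : FiniteDimensional ℝ (span ℝ (range u)) := Module.Finite.of_basis b
  let x := (InnerProductSpace.toDual ℝ _).symm (b.constr ℝ c).toContinuousLinearMap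
  refine ⟨x, x.2, fun j => ?_⟩
  have hb : (b j : H) = u j := congrArg Subtype.val (Module.Basis.span_apply hu j)
  rw [← hb, real_inner_comm]
  change ⟪x, b j⟫ = c j
  rw [InnerProductSpace.toDual_symm_apply]
  exact b.constr_basis ℝ c j

theorem norm_le_of_mem_span_of_inner_sub_eq_zero {ι : Type*} {u : ι → H} {p s : H}
    (hp : p ∈ span ℝ (range u)) (h : ∀ j, ⟪u j, s - p⟫ = 0) : ‖p‖ ≤ ‖s‖ := by
  have hortho : ⟪p, s - p⟫ = 0 :=
    (isOrtho_span.2 (by rintro _ ⟨j, rfl⟩ _ rfl; exact h j)).inner_eq hp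
      (mem_span_singleton_self _)
  have := norm_add_sq_eq_norm_sq_add_norm_sq_real hortho
  rw [add_sub_cancel] at this
  nlinarith [norm_nonneg p, norm_nonneg s, sq_nonneg ‖s - p‖]

theorem sq_le_norm_sq_of_two_inner_eq {x y : H} {a : ℝ} (h : 2 * ⟪x, y⟫ = ‖x‖ ^ 2 + a ^ 2) :
    a ^ 2 ≤ ‖y‖ ^ 2 := by
  nlinarith [real_inner_le_norm x y, sq_nonneg (‖x‖ - ‖y‖)]

theorem eq_add_norm_sub_iff {x s : H} {t τ : ℝ} (hs : ‖s‖ = -τ) :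
    t = τ + ‖x - s‖ ↔ τ ≤ t ∧ 2 * ⟪x, s⟫ = ‖x‖ ^ 2 - t ^ 2 + 2 * t * τ := by
  have key : ‖x - s‖ ^ 2 = ‖x‖ ^ 2 - 2 * ⟪x, s⟫ + τ ^ 2 := by
    rw [norm_sub_sq_real, hs, neg_sq]
  constructor
  · rintro rfl
    exact ⟨le_add_of_nonneg_right (norm_nonneg _), by linear_combination key⟩
  · rintro ⟨hτt, hinner⟩
    have : ‖x - s‖ = t - τ :=
      (sq_eq_sq₀ (norm_nonneg _) (sub_nonneg.2 hτt)).1 (by linear_combination key - hinner)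
    linarith

theorem exists_mem_span_of_eq_add_norm_sub {ι : Type*} [Finite ι] {u : ι → H}
    (hu : LinearIndependent ℝ u) {t : ι → ℝ} {s : H} {τ : ℝ} (hs : ‖s‖ = -τ)
    (h : ∀ j, t j = τ + ‖u j - s‖) :
    ∃ s' ∈ span ℝ (range u), ∃ τ', ‖s'‖ = -τ' ∧ ∀ j, t j = τ' + ‖u j - s'‖ := by
  simp only [eq_add_norm_sub_iff hs] at h
  obtain ⟨x₀, hx₀, hx₀u⟩ := hu.exists_mem_span_inner_eq fun j => (‖u j‖ ^ 2 - t j ^ 2) / 2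
  obtain ⟨w, hw, hwu⟩ := hu.exists_mem_span_inner_eq t
  set p : ℝ → H := fun c => x₀ + c • w
  have hp_mem (c : ℝ) : p c ∈ span ℝ (range u) := add_mem hx₀ (smul_mem _ c hw)
  have hp_inner (c : ℝ) (j : ι) : 2 * ⟪u j, p c⟫ = ‖u j‖ ^ 2 - t j ^ 2 + 2 * t j * c := by
    rw [inner_add_right, real_inner_smul_right, hx₀u, hwu]
    ring
  obtain ⟨o, ho⟩ := Finite.exists_min fun o : Option ι => o.elim 0 t
  set T := o.elim 0 t
  have hT0 : T ≤ 0 := ho none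
  have hτT : τ ≤ T := by
    cases o with
    | none => exact neg_nonneg.1 (hs ▸ norm_nonneg s)
    | some j => exact (h j).1
  have h_lower : ‖p τ‖ ^ 2 - τ ^ 2 ≤ 0 := by
    have := norm_le_of_mem_span_of_inner_sub_eq_zero (s := s) (hp_mem τ) fun j => by
      rw [inner_sub_right]
      linarith [(h j).2, hp_inner τ j]
    nlinarith [norm_nonneg (p τ)]
  have h_upper : 0 ≤ ‖p T‖ ^ 2 - T ^ 2 := by
    cases o with
    | none => simp [T, p]
    | some j =>
      refine sub_nonneg.2 (sq_le_norm_sq_of_two_inner_eq (x := u j) ?_)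
      rw [hp_inner, show T = t j from rfl]
      ring
  obtain ⟨c, ⟨-, hcT⟩, hc⟩ := intermediate_value_Icc hτT
    (by fun_prop : Continuous fun c => ‖p c‖ ^ 2 - c ^ 2).continuousOn ⟨h_lower, h_upper⟩
  have hpc : ‖p c‖ = -c :=
    (sq_eq_sq₀ (norm_nonneg _) (by linarith)).1 (by linear_combination hc)
  exact ⟨p c, hp_mem c, c, hpc, fun j =>
    (eq_add_norm_sub_iff hpc).2 ⟨hcT.trans (ho (some j)), hp_inner c j⟩⟩

end

theorem srp_downdimensioned_has_solution_general
    {H : Type*} [NormedAddCommGroup H] [InnerProductSpace ℝ H]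
    (r : ℕ → H) (t : ℕ → ℝ)
    (hr0 : r 0 = 0) (ht0 : t 0 = 0)
    (hli : LinearIndependent ℝ (fun i : ℕ => r (i + 1)))
    (hsol : ∃ (s : H) (τ : ℝ), ∀ i : ℕ, t i = τ + ‖r i - s‖) :
    ∀ n : ℕ, 1 ≤ n → ∃ (sn : H) (τn : ℝ),
      sn ∈ Submodule.span ℝ (r '' Set.Icc 1 n) ∧
      ∀ i : ℕ, i ≤ n → t i = τn + ‖r i - sn‖ := by
  obtain ⟨s, τ, hs⟩ := hsol
  have hsτ : ‖s‖ = -τ := by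
    have := hs 0
    rw [hr0, ht0, zero_sub, norm_neg] at this
    linarith
  intro n _
  have hli_n : LinearIndependent ℝ fun i : Set.Icc 1 n => r i := by
    have hpred : Function.Injective fun i : Set.Icc 1 n => (i : ℕ) - 1 := fun i j hij =>
      Subtype.ext (by have := i.2.1; have := j.2.1; dsimp only at hij; omega)
    convert hli.comp _ hpred using 2 with i
    rw [Function.comp_apply, Nat.sub_add_cancel i.2.1]
  obtain ⟨sn, hsn, τn, hsnτ, hsn_sol⟩ :=
    exists_mem_span_of_eq_add_norm_sub hli_n (t := fun i => t i) hsτ fun i => hs i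
  refine ⟨sn, τn, by rwa [Set.image_eq_range], fun i hi => ?_⟩
  rcases Nat.eq_zero_or_pos i with rfl | hi0
  · rw [ht0, hr0, zero_sub, norm_neg, hsnτ, add_neg_cancel]
  · exact hsn_sol ⟨i, hi0, hi⟩

/-- If the sound ranging problem in `H` has a solution, then for every `n ≥ 1` the
downdimensioned problem `SRP_n` has a solution. -/
theorem srp_downdimensioned_has_solution
    {H : Type*} [NormedAddCommGroup H] [InnerProductSpace ℝ H] [CompleteSpace H]
    (r : ℕ → H) (t : ℕ → ℝ)
    (hr0 : r 0 = 0) (ht0 : t 0 = 0)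
    (hli : LinearIndependent ℝ (fun i : ℕ => r (i + 1)))
    (hdense : Dense (Submodule.span ℝ (Set.range fun i : ℕ => r (i + 1)) : Set H))
    (hsol : ∃ (s : H) (τ : ℝ), ∀ i : ℕ, t i = τ + ‖r i - s‖) :
    ∀ n : ℕ, 1 ≤ n → ∃ (sn : H) (τn : ℝ),
      sn ∈ Submodule.span ℝ (r '' Set.Icc 1 n) ∧
      ∀ i : ℕ, i ≤ n → t i = τn + ‖r i - sn‖ :=
  srp_downdimensioned_has_solution_general r t hr0 ht0 hli hsol
end

section
/- Suppose the sound ranging problem has a unique solution (s^∞, t^∞) with s^∞ ≠ 0; suppose for each n ≥ 1 the downdimensioned problem SRP_n has a unique solution (s^n, t^n) with s^n ≠ 0; and suppose there exists c ∈ H such that ⟨r i, c⟩ = t i for all i ≥ 1 (equivalently, the coefficient series Σ c̃ⱼ² converges). Then t^n → t^∞ in ℝ and s^n → s^∞ in the norm of H as n → ∞. -/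
open RealInnerProductSpace Filter Topology

/-!
Since `r 0 = 0` and `t 0 = 0`, every solution has `τ = -‖s‖`, and squaring
`t i + ‖s‖ = ‖r i - s‖` turns the remaining equations into the linear conditions
`⟪r i, s + ‖s‖ • c⟫ = (‖r i‖ ^ 2 - t i ^ 2) / 2 = ⟪r i, u⟫` with `u = sInfty + ‖sInfty‖ • c`.
Hence the solution of `SRP_n` is the Galerkin approximation `sN n = P n u - σ n • P n c`, where
`σ n = ‖sN n‖` and `P n` is the orthogonal projection onto `span {r 1, …, r n}`; so `σ n` solves
the scalar equation `σ = ‖P n u - σ • P n c‖`. As `P n → id` strongly, `σ` is bounded and every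
cluster point `x` of it solves the limit equation `x = ‖u - x • c‖` with `-t i ≤ x` for all `i`.
Such an `x` makes `(u - x • c, -x)` a solution of the SRP, so uniqueness forces `x = ‖sInfty‖`.
-/

section NonlinearGalerkin

variable {H : Type*} [NormedAddCommGroup H] [InnerProductSpace ℝ H]

theorem Submodule.starProjection_span_eq_of_inner_eq {S : Set H}
    [(Submodule.span ℝ S).HasOrthogonalProjection] {x v : H} (hv : v ∈ Submodule.span ℝ S)
    (h : ∀ y ∈ S, ⟪y, x⟫ = ⟪y, v⟫) : (Submodule.span ℝ S).starProjection x = v := by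
  refine Submodule.eq_starProjection_of_mem_of_inner_eq_zero hv fun w hw => ?_
  have hS : Submodule.span ℝ S ≤ (ℝ ∙ (x - v))ᗮ := by
    rw [Submodule.span_le]
    intro y hy
    rw [SetLike.mem_coe, Submodule.mem_orthogonal_singleton_iff_inner_left, inner_sub_right,
      h y hy, sub_self]
  exact Submodule.mem_orthogonal_singleton_iff_inner_right.1 (hS hw)

lemma eq_starProjection_sub_smul {S : Set H} [(Submodule.span ℝ S).HasOrthogonalProjection]
    {s u c : H} {σ : ℝ} (hs : s ∈ Submodule.span ℝ S) (h : ∀ y ∈ S, ⟪y, s + σ • c⟫ = ⟪y, u⟫) :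
    s = (Submodule.span ℝ S).starProjection u - σ • (Submodule.span ℝ S).starProjection c := by
  rw [← map_smul, ← map_sub, Submodule.starProjection_span_eq_of_inner_eq hs fun y hy => ?_]
  rw [inner_sub_right, ← h y hy, inner_add_right, add_sub_cancel_right]

lemma mul_abs_one_sub_norm_le {a b : H} {σ : ℝ} (hσ : σ = ‖a - σ • b‖) :
    σ * |1 - ‖b‖| ≤ ‖a‖ := by
  have hσ₀ : 0 ≤ σ := hσ ▸ norm_nonneg _
  have h₁ := norm_sub_le a (σ • b)
  have h₂ : ‖σ • b‖ ≤ ‖a‖ + ‖a - σ • b‖ := by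
    simpa using norm_sub_le a (a - σ • b)
  rw [norm_smul, Real.norm_of_nonneg hσ₀, ← hσ] at h₁ h₂
  rw [← abs_of_nonneg hσ₀, ← abs_mul, abs_le]
  constructor <;> nlinarith

lemma two_mul_inner_le_sq {a b : H} {σ : ℝ} (hσ : σ = ‖a - σ • b‖) (hb : ‖b‖ ≤ 1) :
    2 * σ * ⟪a, b⟫ ≤ ‖a‖ ^ 2 := by
  have hσ₀ : 0 ≤ σ := hσ ▸ norm_nonneg _
  have h := norm_sub_sq_real a (σ • b)
  rw [← hσ, real_inner_smul_right, norm_smul, Real.norm_of_nonneg hσ₀] at h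
  have hb2 : ‖b‖ ^ 2 ≤ 1 := by nlinarith [norm_nonneg b]
  nlinarith [mul_le_mul_of_nonneg_left hb2 (sq_nonneg σ)]

variable {a b : ℕ → H} {u c : H} {σ : ℕ → ℝ}

/-- Away from `‖c‖ = 1` the triangle inequality bounds `σ`; at `‖c‖ = 1` the quadratic terms
cancel and the bound comes from the sign of `⟪u, c⟫`. -/
lemma exists_eventually_le_of_eq_norm_sub_smul (ha : Tendsto a atTop (𝓝 u))
    (hb : Tendsto b atTop (𝓝 c)) (hbc : ∀ n, ‖b n‖ ≤ ‖c‖) (huc : ‖c‖ = 1 → 0 < ⟪u, c⟫)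
    (hσ : ∀ᶠ n in atTop, σ n = ‖a n - σ n • b n‖) : ∃ M, ∀ᶠ n in atTop, σ n ≤ M := by
  have haM : ∀ᶠ n in atTop, ‖a n‖ < ‖u‖ + 1 := ha.norm.eventually (gt_mem_nhds (lt_add_one _))
  by_cases hc1 : ‖c‖ = 1
  · have hβ := huc hc1
    have hab : ∀ᶠ n in atTop, ⟪u, c⟫ / 2 < ⟪a n, b n⟫ :=
      (ha.inner hb).eventually (lt_mem_nhds (half_lt_self hβ))
    refine ⟨2 * (‖u‖ + 1) ^ 2 / ⟪u, c⟫, ?_⟩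
    filter_upwards [hσ, haM, hab] with n hσn han habn
    have hσ₀ : 0 ≤ σ n := hσn ▸ norm_nonneg _
    have hquad := two_mul_inner_le_sq hσn (hc1 ▸ hbc n)
    rw [le_div_iff₀ hβ]
    nlinarith [norm_nonneg (a n), mul_le_mul_of_nonneg_left habn.le hσ₀]
  · have hδ : 0 < |1 - ‖c‖| := abs_pos.2 (sub_ne_zero.2 (Ne.symm hc1))
    have hb1 : ∀ᶠ n in atTop, |1 - ‖c‖| / 2 < |1 - ‖b n‖| :=
      (tendsto_const_nhds.sub hb.norm).abs.eventually (lt_mem_nhds (half_lt_self hδ))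
    refine ⟨2 * (‖u‖ + 1) / |1 - ‖c‖|, ?_⟩
    filter_upwards [hσ, haM, hb1] with n hσn han hbn
    have hσ₀ : 0 ≤ σ n := hσn ▸ norm_nonneg _
    have hlin := mul_abs_one_sub_norm_le hσn
    rw [le_div_iff₀ hδ]
    nlinarith [mul_le_mul_of_nonneg_left hbn.le hσ₀]

def IsAdmissibleRoot {ι : Type*} (g : ι → ℝ) (u c : H) (x : ℝ) : Prop :=
  ‖u - x • c‖ = x ∧ ∀ i, g i ≤ x

variable {ι : Type*} {g : ι → ℝ} {x₀ : ℝ}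

lemma inner_pos_of_unique_admissibleRoot (hx₀ : IsAdmissibleRoot g u c x₀)
    (huniq : ∀ x, IsAdmissibleRoot g u c x → x = x₀) (hc1 : ‖c‖ = 1) : 0 < ⟪u, c⟫ := by
  have hx₀₀ : 0 ≤ x₀ := hx₀.1 ▸ norm_nonneg _
  have hu : u ≠ 0 := by
    rintro rfl
    -- with `u = 0` every `x ≥ x₀` is an admissible root
    have := huniq (x₀ + 1) ⟨by rw [zero_sub, norm_neg, norm_smul, hc1, mul_one,
      Real.norm_of_nonneg (by linarith)], fun i => (hx₀.2 i).trans (by linarith)⟩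
    linarith
  have hsq := norm_sub_sq_real u (x₀ • c)
  rw [hx₀.1, real_inner_smul_right, norm_smul, hc1, mul_one, Real.norm_of_nonneg hx₀₀] at hsq
  nlinarith [norm_pos_iff.2 hu]

theorem tendsto_of_unique_admissibleRoot (ha : Tendsto a atTop (𝓝 u))
    (hb : Tendsto b atTop (𝓝 c)) (hbc : ∀ n, ‖b n‖ ≤ ‖c‖)
    (hσ : ∀ᶠ n in atTop, σ n = ‖a n - σ n • b n‖) (hg : ∀ i, ∀ᶠ n in atTop, g i ≤ σ n)
    (hx₀ : IsAdmissibleRoot g u c x₀) (huniq : ∀ x, IsAdmissibleRoot g u c x → x = x₀) :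
    Tendsto σ atTop (𝓝 x₀) := by
  obtain ⟨M, hM⟩ := exists_eventually_le_of_eq_norm_sub_smul ha hb hbc
    (inner_pos_of_unique_admissibleRoot hx₀ huniq) hσ
  refine isCompact_Icc.tendsto_nhds_of_unique_mapClusterPt (s := Set.Icc 0 M) ?_ ?_
  · filter_upwards [hσ, hM] with n hσn hMn using ⟨hσn ▸ norm_nonneg _, hMn⟩
  · intro x _ hx
    obtain ⟨ψ, hψ, hσψ⟩ := hx.tendsto_subseq
    have hψ' := hψ.tendsto_atTop
    refine huniq x ⟨tendsto_nhds_unique ?_ hσψ,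
      fun i => ge_of_tendsto hσψ (hψ'.eventually (hg i))⟩
    refine (((ha.comp hψ').sub (hσψ.smul (hb.comp hψ'))).norm).congr' ?_
    filter_upwards [hψ'.eventually hσ] with n hn using hn.symm

end NonlinearGalerkin

section SoundRanging

variable {H : Type*} [NormedAddCommGroup H] [InnerProductSpace ℝ H]

instance (r : ℕ → H) (n : ℕ) : FiniteDimensional ℝ (Submodule.span ℝ (r '' Set.Icc 1 n)) :=
  FiniteDimensional.span_of_finite ℝ ((Set.finite_Icc 1 n).image r)

lemma tendsto_starProjection_span_image_Icc {r : ℕ → H}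
    (hdense : Dense (Submodule.span ℝ (Set.range fun i : ℕ => r (i + 1)) : Set H)) (x : H) :
    Tendsto (fun n => (Submodule.span ℝ (r '' Set.Icc 1 n)).starProjection x) atTop (𝓝 x) := by
  refine Submodule.starProjection_tendsto_self _
    (fun m n hmn => Submodule.span_mono (Set.image_mono (Set.Icc_subset_Icc_right hmn))) x ?_
  rw [← Submodule.dense_iff_topologicalClosure_eq_top.mp hdense]
  refine Submodule.topologicalClosure_mono (Submodule.span_le.2 ?_)
  rintro _ ⟨i, rfl⟩
  exact Submodule.mem_iSup_of_mem (i + 1)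
    (Submodule.subset_span ⟨i + 1, ⟨le_add_self, le_rfl⟩, rfl⟩)

lemma eq_neg_norm_add_norm_sub_iff {x s c : H} {y : ℝ} (hc : ⟪x, c⟫ = y) :
    y = -‖s‖ + ‖x - s‖ ↔ -y ≤ ‖s‖ ∧ ⟪x, s + ‖s‖ • c⟫ = (‖x‖ ^ 2 - y ^ 2) / 2 := by
  have hsq := norm_sub_sq_real x s
  rw [inner_add_right, real_inner_smul_right, hc]
  constructor
  · intro h
    have hxs : ‖x - s‖ = y + ‖s‖ := by linarith
    rw [hxs] at hsq
    exact ⟨by linarith [norm_nonneg (x - s)], by linear_combination hsq / 2⟩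
  · rintro ⟨hy, hinner⟩
    have hxs : ‖x - s‖ = y + ‖s‖ :=
      (pow_left_inj₀ (norm_nonneg _) (by linarith) two_ne_zero).1
        (by linear_combination hsq - 2 * hinner)
    linarith

variable {r : ℕ → H} {t : ℕ → ℝ} {c : H}

lemma eq_neg_norm_and_inner_eq_of_forall_mem (hr0 : r 0 = 0) (ht0 : t 0 = 0)
    (hc : ∀ i, ⟪r i, c⟫ = t i) {I : Set ℕ} (hI : 0 ∈ I) {s : H} {τ : ℝ}
    (h : ∀ i ∈ I, t i = τ + ‖r i - s‖) :
    τ = -‖s‖ ∧ ∀ i ∈ I, -t i ≤ ‖s‖ ∧ ⟪r i, s + ‖s‖ • c⟫ = (‖r i‖ ^ 2 - t i ^ 2) / 2 := by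
  have hτ : τ = -‖s‖ := by
    have h0 := h 0 hI
    rw [hr0, ht0, zero_sub, norm_neg] at h0
    linarith
  subst hτ
  exact ⟨rfl, fun i hi => (eq_neg_norm_add_norm_sub_iff (hc i)).1 (h i hi)⟩

lemma eq_neg_norm_and_eq_starProjection_sub_smul (hr0 : r 0 = 0) (ht0 : t 0 = 0)
    (hc : ∀ i, ⟪r i, c⟫ = t i) {u : H} (hu : ∀ i, ⟪r i, u⟫ = (‖r i‖ ^ 2 - t i ^ 2) / 2)
    {n : ℕ} {s : H} {τ : ℝ} (hs : s ∈ Submodule.span ℝ (r '' Set.Icc 1 n))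
    (h : ∀ i, i ≤ n → t i = τ + ‖r i - s‖) :
    τ = -‖s‖ ∧ (∀ i, i ≤ n → -t i ≤ ‖s‖) ∧
      s = (Submodule.span ℝ (r '' Set.Icc 1 n)).starProjection u -
        ‖s‖ • (Submodule.span ℝ (r '' Set.Icc 1 n)).starProjection c := by
  obtain ⟨hτ, hi⟩ := eq_neg_norm_and_inner_eq_of_forall_mem hr0 ht0 hc
    (I := Set.Iic n) n.zero_le h
  refine ⟨hτ, fun i hin => (hi i hin).1, eq_starProjection_sub_smul hs ?_⟩
  rintro _ ⟨i, hi1n, rfl⟩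
  rw [(hi i hi1n.2).2, hu]

lemma eq_neg_add_norm_sub_of_isAdmissibleRoot {u : H} {x : ℝ}
    (hc : ∀ i, ⟪r i, c⟫ = t i) (hu : ∀ i, ⟪r i, u⟫ = (‖r i‖ ^ 2 - t i ^ 2) / 2)
    (hx : IsAdmissibleRoot (fun i => -t i) u c x) (i : ℕ) :
    t i = -x + ‖r i - (u - x • c)‖ := by
  have h := (eq_neg_norm_add_norm_sub_iff (s := u - x • c) (hc i)).2
    ⟨by rw [hx.1]; exact hx.2 i, by rw [hx.1, sub_add_cancel, hu]⟩
  rwa [hx.1] at h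

end SoundRanging

theorem srp_downdimensioned_converges_general
    {H : Type*} [NormedAddCommGroup H] [InnerProductSpace ℝ H]
    (r : ℕ → H) (t : ℕ → ℝ)
    (hr0 : r 0 = 0) (ht0 : t 0 = 0)
    (hdense : Dense (Submodule.span ℝ (Set.range fun i : ℕ => r (i + 1)) : Set H))
    (sInfty : H) (tInfty : ℝ)
    (hsolInfty : ∀ i : ℕ, t i = tInfty + ‖r i - sInfty‖)
    (huniqInfty : ∀ (s : H) (τ : ℝ), (∀ i : ℕ, t i = τ + ‖r i - s‖) → s = sInfty ∧ τ = tInfty)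
    (sN : ℕ → H) (tN : ℕ → ℝ)
    (hsolN : ∀ n : ℕ, 1 ≤ n →
      sN n ∈ Submodule.span ℝ (r '' Set.Icc 1 n) ∧ sN n ≠ 0 ∧
      (∀ i : ℕ, i ≤ n → t i = tN n + ‖r i - sN n‖))
    (c : H) (hc : ∀ i : ℕ, 1 ≤ i → ⟪r i, c⟫ = t i) :
    Filter.Tendsto tN Filter.atTop (nhds tInfty) ∧
      Filter.Tendsto sN Filter.atTop (nhds sInfty) := by
  have hc₀ : ∀ i, ⟪r i, c⟫ = t i := fun i =>
    i.eq_zero_or_pos.elim (fun h => by rw [h, hr0, ht0, inner_zero_left]) (hc i)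
  obtain ⟨htInfty, hInfty⟩ := eq_neg_norm_and_inner_eq_of_forall_mem hr0 ht0 hc₀
    (Set.mem_univ 0) fun i _ => hsolInfty i
  set u := sInfty + ‖sInfty‖ • c
  have hN n (hn : 1 ≤ n) := eq_neg_norm_and_eq_starProjection_sub_smul hr0 ht0 hc₀
    (fun i => (hInfty i trivial).2) (hsolN n hn).1 (hsolN n hn).2.2
  have hPu := tendsto_starProjection_span_image_Icc hdense u
  have hPc := tendsto_starProjection_span_image_Icc hdense c
  have huniq x (hx : IsAdmissibleRoot (fun i => -t i) u c x) : x = ‖sInfty‖ := by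
    have h := huniqInfty _ _ <|
      eq_neg_add_norm_sub_of_isAdmissibleRoot hc₀ (fun i => (hInfty i trivial).2) hx
    linarith [h.2]
  have hσ : Tendsto (fun n => ‖sN n‖) atTop (𝓝 ‖sInfty‖) :=
    tendsto_of_unique_admissibleRoot hPu hPc
      (fun n => (Submodule.span ℝ (r '' Set.Icc 1 n)).norm_starProjection_apply_le c)
      (by filter_upwards [eventually_ge_atTop 1] with n hn using by rw [← (hN n hn).2.2])
      (fun i => by filter_upwards [eventually_ge_atTop (max i 1)] with n hn
                     using (hN n (le_of_max_le_right hn)).2.1 i (le_of_max_le_left hn))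
      ⟨by simp [u], fun i => (hInfty i trivial).1⟩ huniq
  refine ⟨?_, ?_⟩
  · rw [htInfty]
    refine hσ.neg.congr' ?_
    filter_upwards [eventually_ge_atTop 1] with n hn using (hN n hn).1.symm
  · have hlim := hPu.sub (hσ.smul hPc)
    rw [add_sub_cancel_right] at hlim
    refine hlim.congr' ?_
    filter_upwards [eventually_ge_atTop 1] with n hn using (hN n hn).2.2.symm

/-- Galerkin-type convergence: if the SRP has a unique solution `(sInfty, tInfty)` with
`sInfty ≠ 0`, each downdimensioned problem `SRP_n` has a unique solution
`(sN n, tN n)` with `sN n ≠ 0`, and the coefficient series converges (i.e. there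
is `c ∈ H` with `⟪r i, c⟫ = t i` for all `i ≥ 1`), then `tN n → tInfty` and
`sN n → sInfty`. -/
theorem srp_downdimensioned_converges
    {H : Type*} [NormedAddCommGroup H] [InnerProductSpace ℝ H] [CompleteSpace H]
    (r : ℕ → H) (t : ℕ → ℝ)
    (hr0 : r 0 = 0) (ht0 : t 0 = 0)
    (hli : LinearIndependent ℝ (fun i : ℕ => r (i + 1)))
    (hdense : Dense (Submodule.span ℝ (Set.range fun i : ℕ => r (i + 1)) : Set H))
    (sInfty : H) (tInfty : ℝ) (hsInfty : sInfty ≠ 0)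
    (hsolInfty : ∀ i : ℕ, t i = tInfty + ‖r i - sInfty‖)
    (huniqInfty : ∀ (s : H) (τ : ℝ), (∀ i : ℕ, t i = τ + ‖r i - s‖) → s = sInfty ∧ τ = tInfty)
    (sN : ℕ → H) (tN : ℕ → ℝ)
    (hsolN : ∀ n : ℕ, 1 ≤ n →
      sN n ∈ Submodule.span ℝ (r '' Set.Icc 1 n) ∧ sN n ≠ 0 ∧
      (∀ i : ℕ, i ≤ n → t i = tN n + ‖r i - sN n‖))
    (huniqN : ∀ n : ℕ, 1 ≤ n → ∀ (s : H) (τ : ℝ),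
      s ∈ Submodule.span ℝ (r '' Set.Icc 1 n) →
      (∀ i : ℕ, i ≤ n → t i = τ + ‖r i - s‖) → s = sN n ∧ τ = tN n)
    (c : H) (hc : ∀ i : ℕ, 1 ≤ i → ⟪r i, c⟫ = t i) :
    Filter.Tendsto tN Filter.atTop (nhds tInfty) ∧
      Filter.Tendsto sN Filter.atTop (nhds sInfty) :=
  srp_downdimensioned_converges_general r t hr0 ht0 hdense sInfty tInfty hsolInfty huniqInfty sN tN
    hsolN c hc
end

section
/- Let r 1, r 2, r 3 be pairwise orthogonal unit vectors in H, let t 1, t 2, t 3 ∈ ℝ, and let p, q ∈ H satisfy ⟨r i, p⟩ = cos (t i) and ⟨r i, q⟩ = sin (t i) for i = 1, 2, 3. Then ‖p‖² + ‖q‖² ≥ 3; in particular it is impossible that simultaneously ‖p‖ = 1, ‖q‖ = 1 and ⟨p, q⟩ = 0 (the degenerate Subcase 3b of sound ranging on the sphere is excluded). -/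
/-!
Bessel's inequality for the orthonormal family `r₁, r₂, r₃` bounds `‖p‖²` below by
`∑ cos² tᵢ` and `‖q‖²` by `∑ sin² tᵢ`; adding the two and using `sin² + cos² = 1`
gives `‖p‖² + ‖q‖² ≥ 3`, which rules out `‖p‖ = ‖q‖ = 1`.
-/

open RealInnerProductSpace

theorem Orthonormal.card_le_norm_sq_add_norm_sq {ι H : Type*} [Fintype ι]
    [NormedAddCommGroup H] [InnerProductSpace ℝ H] {v : ι → H} (hv : Orthonormal ℝ v)
    (t : ι → ℝ) {p q : H} (hp : ∀ i, ⟪v i, p⟫ = Real.cos (t i))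
    (hq : ∀ i, ⟪v i, q⟫ = Real.sin (t i)) :
    (Fintype.card ι : ℝ) ≤ ‖p‖ ^ 2 + ‖q‖ ^ 2 := by
  have hBessel : ∀ x : H, ∑ i, ⟪v i, x⟫ ^ 2 ≤ ‖x‖ ^ 2 := fun x => by
    simpa only [Real.norm_eq_abs, sq_abs] using hv.sum_inner_products_le (s := Finset.univ) x
  calc (Fintype.card ι : ℝ)
      = ∑ i, (Real.cos (t i) ^ 2 + Real.sin (t i) ^ 2) := by simp [Real.cos_sq_add_sin_sq]
    _ = ∑ i, ⟪v i, p⟫ ^ 2 + ∑ i, ⟪v i, q⟫ ^ 2 := by simp only [hp, hq, Finset.sum_add_distrib]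
    _ ≤ ‖p‖ ^ 2 + ‖q‖ ^ 2 := add_le_add (hBessel p) (hBessel q)

theorem orthonormal_fin_three {H : Type*} [NormedAddCommGroup H] [InnerProductSpace ℝ H]
    {r₁ r₂ r₃ : H} (hn1 : ‖r₁‖ = 1) (hn2 : ‖r₂‖ = 1) (hn3 : ‖r₃‖ = 1)
    (h12 : ⟪r₁, r₂⟫ = 0) (h13 : ⟪r₁, r₃⟫ = 0) (h23 : ⟪r₂, r₃⟫ = 0) :
    Orthonormal ℝ ![r₁, r₂, r₃] := by
  refine ⟨fun i => by fin_cases i <;> assumption, fun i j hij => ?_⟩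
  fin_cases i <;> fin_cases j <;> simp_all [real_inner_comm]

theorem sphere_subcase3b_excluded_general
    {H : Type*} [NormedAddCommGroup H] [InnerProductSpace ℝ H]
    (r₁ r₂ r₃ : H)
    (hn1 : ‖r₁‖ = 1) (hn2 : ‖r₂‖ = 1) (hn3 : ‖r₃‖ = 1)
    (h12 : ⟪r₁, r₂⟫ = 0) (h13 : ⟪r₁, r₃⟫ = 0) (h23 : ⟪r₂, r₃⟫ = 0)
    (t₁ t₂ t₃ : ℝ) (p q : H)
    (hp1 : ⟪r₁, p⟫ = Real.cos t₁) (hp2 : ⟪r₂, p⟫ = Real.cos t₂)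
    (hp3 : ⟪r₃, p⟫ = Real.cos t₃)
    (hq1 : ⟪r₁, q⟫ = Real.sin t₁) (hq2 : ⟪r₂, q⟫ = Real.sin t₂)
    (hq3 : ⟪r₃, q⟫ = Real.sin t₃) :
    3 ≤ ‖p‖ ^ 2 + ‖q‖ ^ 2 ∧ ¬(‖p‖ = 1 ∧ ‖q‖ = 1 ∧ ⟪p, q⟫ = 0) := by
  have hbound : 3 ≤ ‖p‖ ^ 2 + ‖q‖ ^ 2 := by
    have := (orthonormal_fin_three hn1 hn2 hn3 h12 h13 h23).card_le_norm_sq_add_norm_sq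
      ![t₁, t₂, t₃] (p := p) (q := q) (fun i => by fin_cases i <;> assumption)
      (fun i => by fin_cases i <;> assumption)
    simpa using this
  refine ⟨hbound, fun ⟨hp, hq, _⟩ => ?_⟩
  rw [hp, hq] at hbound
  norm_num at hbound

/-- If `r₁, r₂, r₃` are pairwise orthogonal unit vectors and `p, q` satisfy
`⟪rᵢ, p⟫ = cos tᵢ`, `⟪rᵢ, q⟫ = sin tᵢ`, then `‖p‖² + ‖q‖² ≥ 3`; in particular it
is impossible that `‖p‖ = 1`, `‖q‖ = 1` and `⟪p, q⟫ = 0` simultaneously. -/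
theorem sphere_subcase3b_excluded
    {H : Type*} [NormedAddCommGroup H] [InnerProductSpace ℝ H] [CompleteSpace H]
    (r₁ r₂ r₃ : H)
    (hn1 : ‖r₁‖ = 1) (hn2 : ‖r₂‖ = 1) (hn3 : ‖r₃‖ = 1)
    (h12 : ⟪r₁, r₂⟫ = 0) (h13 : ⟪r₁, r₃⟫ = 0) (h23 : ⟪r₂, r₃⟫ = 0)
    (t₁ t₂ t₃ : ℝ) (p q : H)
    (hp1 : ⟪r₁, p⟫ = Real.cos t₁) (hp2 : ⟪r₂, p⟫ = Real.cos t₂)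
    (hp3 : ⟪r₃, p⟫ = Real.cos t₃)
    (hq1 : ⟪r₁, q⟫ = Real.sin t₁) (hq2 : ⟪r₂, q⟫ = Real.sin t₂)
    (hq3 : ⟪r₃, q⟫ = Real.sin t₃) :
    3 ≤ ‖p‖ ^ 2 + ‖q‖ ^ 2 ∧ ¬(‖p‖ = 1 ∧ ‖q‖ = 1 ∧ ⟪p, q⟫ = 0) :=
  sphere_subcase3b_excluded_general r₁ r₂ r₃ hn1 hn2 hn3 h12 h13 h23 t₁ t₂ t₃ p q hp1 hp2 hp3 hq1
    hq2 hq3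
end

section
/- Let (e k)_{k ≥ 1} be an orthonormal family in H whose linear span is dense (an orthonormal basis). Define sensors r 0 = 0, r k = (1/k) · e k for k ≥ 1, and times t 0 = 0, t k = −π/√6 + √(π²/6 + 3/k²) for k ≥ 1. Then the pair (s', t') with s' = −Σ_{k≥1} (1/k) e k and t' = −π/√6 solves the sound ranging problem (t k = t' + ‖r k − s'‖ for all k ∈ ℕ), and there exists another pair (s'', t'') with (s'', t'') ≠ (s', t') which also solves it: t k = t'' + ‖r k − s''‖ for all k ∈ ℕ. Hence the sound ranging problem can have two distinct solutions even when the sensors form a basis of H. -/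
open RealInnerProductSpace

/-!
Place the sensor `r 0` at the origin and write `a j = 1/(j+1)`, `Q = π/√6`, so that
`Q² = ∑ a j²` and the arrival time at `r (j+1) = a j • e (j+1)` is
`τ j = √(Q² + 3 a j²) - Q` (`delay Q (a j)`). A source `x` with `‖x‖ = ρ`, emitting at
time `-ρ`, reproduces these times exactly when its coordinates are
`c j = -a j + (Q - ρ) τ j / a j` (`sourceCoeff Q ρ (a j)`); by Parseval the remaining
condition `‖x‖ = ρ` becomes `∑ c j² = ρ²`, a quadratic equation in `Q - ρ`. The root
`Q - ρ = 0` is the source `s'`. The other root `2 (T - Q) / (S - 1)`, with `T = ∑ τ j` and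
`S = ∑ (τ j / a j)²`, is nonzero because `τ j > a j² / Q` termwise, and it is at most `Q`
because `∑ c j² ≥ 0` at `ρ = 0`.
-/

section Orthonormal

variable {ι H : Type*} [NormedAddCommGroup H] [InnerProductSpace ℝ H]
  {v : ι → H} {c : ι → ℝ} {x : H}

theorem Orthonormal.inner_left_eq_of_hasSum (hv : Orthonormal ℝ v)
    (hx : HasSum (fun j => c j • v j) x) (i : ι) : ⟪v i, x⟫ = c i := by
  classical
  refine ((innerSL ℝ (v i)).hasSum hx).unique ((hasSum_ite_eq i (c i)).congr_fun fun j => ?_)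
  simp only [innerSL_apply_apply, real_inner_smul_right, orthonormal_iff_ite.mp hv i j]
  by_cases h : j = i
  · simp [h]
  · simp [h, Ne.symm h]

theorem Orthonormal.hasSum_sq_of_hasSum (hv : Orthonormal ℝ v)
    (hx : HasSum (fun j => c j • v j) x) : HasSum (fun j => c j ^ 2) (‖x‖ ^ 2) := by
  rw [← real_inner_self_eq_norm_sq]
  refine ((innerSL ℝ x).hasSum hx).congr_fun fun j => ?_
  rw [innerSL_apply_apply, real_inner_smul_right, real_inner_comm,
    hv.inner_left_eq_of_hasSum hx, sq]

theorem Orthonormal.summable_smul [CompleteSpace H] (hv : Orthonormal ℝ v)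
    (hc : Summable fun j => c j ^ 2) : Summable fun j => c j • v j := by
  convert (hv.orthogonalFamily.summable_iff_norm_sq_summable c).mpr (by simpa using hc) with j
  exact (LinearIsometry.toSpanSingleton_apply (hv.1 j) (c j)).symm

end Orthonormal

theorem nonempty_of_hasSum_ne_zero {ι α : Type*} [AddCommMonoid α] [TopologicalSpace α]
    [T2Space α] {f : ι → α} {s : α} (hf : HasSum f s) (hs : s ≠ 0) : Nonempty ι := by
  by_contra h
  rw [not_nonempty_iff] at h
  exact hs (hf.unique hasSum_empty)

namespace SoundRanging

noncomputable def delay (Q a : ℝ) : ℝ := √(Q ^ 2 + 3 * a ^ 2) - Q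

noncomputable def sourceCoeff (Q ρ a : ℝ) : ℝ := -a + (Q - ρ) * (delay Q a / a)

section Scalar

variable {Q ρ a : ℝ}

theorem delay_nonneg : 0 ≤ delay Q a := by
  rw [delay, sub_nonneg]
  exact (le_abs_self Q).trans (Real.abs_le_sqrt (by nlinarith))

theorem delay_sq_add_mul : delay Q a ^ 2 + 2 * Q * delay Q a = 3 * a ^ 2 := by
  have h := Real.sq_sqrt (show 0 ≤ Q ^ 2 + 3 * a ^ 2 by positivity)
  rw [delay]
  linear_combination h

theorem delay_le (hQ : 0 < Q) : delay Q a ≤ 3 / (2 * Q) * a ^ 2 := by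
  rw [div_mul_eq_mul_div, le_div_iff₀ (by positivity)]
  nlinarith [delay_sq_add_mul (Q := Q) (a := a), sq_nonneg (delay Q a)]

theorem sq_div_lt_delay (hQ : 0 < Q) (ha : a ≠ 0) (haQ : a ^ 2 < Q ^ 2) :
    a ^ 2 / Q < delay Q a := by
  have ha2 : 0 < a ^ 2 := by positivity
  have h := delay_sq_add_mul (Q := Q) (a := a)
  by_contra! hle
  have hsq : delay Q a ^ 2 ≤ (a ^ 2 / Q) ^ 2 := pow_le_pow_left₀ delay_nonneg hle 2
  have : (a ^ 2 / Q) ^ 2 < a ^ 2 := by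
    rw [div_pow, div_lt_iff₀ (by positivity)]
    nlinarith
  have : delay Q a * Q ≤ a ^ 2 := (le_div_iff₀ hQ).mp hle
  linarith

theorem delay_div_sq_le (hQ : 0 < Q) : (delay Q a / a) ^ 2 ≤ (3 / (2 * Q)) ^ 2 * a ^ 2 := by
  rcases eq_or_ne a 0 with rfl | ha
  · simp
  rw [div_pow, div_le_iff₀ (by positivity)]
  calc delay Q a ^ 2 ≤ (3 / (2 * Q) * a ^ 2) ^ 2 :=
        pow_le_pow_left₀ delay_nonneg (delay_le hQ) 2
    _ = (3 / (2 * Q)) ^ 2 * a ^ 2 * a ^ 2 := by ring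

theorem sq_div_sq_lt_delay_div_sq (hQ : 0 < Q) (ha : a ≠ 0) (haQ : a ^ 2 < Q ^ 2) :
    a ^ 2 / Q ^ 2 < (delay Q a / a) ^ 2 := by
  have hlt := pow_lt_pow_left₀ (sq_div_lt_delay hQ ha haQ) (by positivity) two_ne_zero
  rw [div_pow, lt_div_iff₀ (by positivity)]
  calc a ^ 2 / Q ^ 2 * a ^ 2 = (a ^ 2 / Q) ^ 2 := by ring
    _ < delay Q a ^ 2 := hlt

theorem sourceCoeff_self : sourceCoeff Q Q a = -a := by
  simp [sourceCoeff]

theorem mul_sourceCoeff (ha : a ≠ 0) :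
    a * sourceCoeff Q ρ a = -a ^ 2 + (Q - ρ) * delay Q a := by
  rw [sourceCoeff]
  field_simp

theorem exists_root_ne {T S : ℝ} (hQ : 0 < Q) (hT : Q < T) (hS : 1 < S)
    (h₀ : 0 ≤ Q ^ 2 - 2 * Q * T + Q ^ 2 * S) :
    ∃ ρ, 0 ≤ ρ ∧ ρ ≠ Q ∧ Q ^ 2 - 2 * (Q - ρ) * T + (Q - ρ) ^ 2 * S = ρ ^ 2 := by
  set x := 2 * (T - Q) / (S - 1) with hx_def
  have hx : x * (S - 1) = 2 * (T - Q) := div_mul_cancel₀ _ (by linarith)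
  have hx0 : 0 < x := div_pos (by linarith) (by linarith)
  refine ⟨Q - x, ?_, by linarith, ?_⟩
  · rw [sub_nonneg, hx_def, div_le_iff₀ (by linarith)]
    nlinarith
  · linear_combination x * hx

end Scalar

section Sums

variable {ι : Type*} {Q : ℝ} {a : ι → ℝ}

theorem summable_delay (hQ : HasSum (fun j => a j ^ 2) (Q ^ 2)) (hQ0 : 0 < Q) :
    Summable fun j => delay Q (a j) :=
  Summable.of_nonneg_of_le (fun _ => delay_nonneg) (fun _ => delay_le hQ0) (hQ.summable.mul_left _)

theorem summable_delay_div_sq (hQ : HasSum (fun j => a j ^ 2) (Q ^ 2)) (hQ0 : 0 < Q) :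
    Summable fun j => (delay Q (a j) / a j) ^ 2 :=
  Summable.of_nonneg_of_le (fun _ => sq_nonneg _) (fun _ => delay_div_sq_le hQ0)
    (hQ.summable.mul_left _)

theorem lt_tsum_delay (hQ : HasSum (fun j => a j ^ 2) (Q ^ 2)) (hQ0 : 0 < Q)
    (ha : ∀ j, a j ≠ 0) (haQ : ∀ j, a j ^ 2 < Q ^ 2) : Q < ∑' j, delay Q (a j) := by
  obtain ⟨i⟩ := nonempty_of_hasSum_ne_zero hQ (pow_ne_zero 2 hQ0.ne')
  have hlt j := sq_div_lt_delay hQ0 (ha j) (haQ j)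
  have hsum := hQ.div_const Q
  rw [sq Q, mul_self_div_self] at hsum
  exact hasSum_lt (fun j => (hlt j).le) (hlt i) hsum (summable_delay hQ hQ0).hasSum

theorem one_lt_tsum_delay_div_sq (hQ : HasSum (fun j => a j ^ 2) (Q ^ 2)) (hQ0 : 0 < Q)
    (ha : ∀ j, a j ≠ 0) (haQ : ∀ j, a j ^ 2 < Q ^ 2) :
    1 < ∑' j, (delay Q (a j) / a j) ^ 2 := by
  obtain ⟨i⟩ := nonempty_of_hasSum_ne_zero hQ (pow_ne_zero 2 hQ0.ne')
  have hlt j := sq_div_sq_lt_delay_div_sq hQ0 (ha j) (haQ j)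
  have hsum := hQ.div_const (Q ^ 2)
  rw [div_self (pow_ne_zero 2 hQ0.ne')] at hsum
  exact hasSum_lt (fun j => (hlt j).le) (hlt i) hsum (summable_delay_div_sq hQ hQ0).hasSum

theorem hasSum_sourceCoeff_sq (hQ : HasSum (fun j => a j ^ 2) (Q ^ 2)) (hQ0 : 0 < Q)
    (ha : ∀ j, a j ≠ 0) (ρ : ℝ) :
    HasSum (fun j => sourceCoeff Q ρ (a j) ^ 2)
      (Q ^ 2 - 2 * (Q - ρ) * ∑' j, delay Q (a j) +
        (Q - ρ) ^ 2 * ∑' j, (delay Q (a j) / a j) ^ 2) := by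
  refine ((hQ.sub ((summable_delay hQ hQ0).hasSum.mul_left (2 * (Q - ρ)))).add
    ((summable_delay_div_sq hQ hQ0).hasSum.mul_left ((Q - ρ) ^ 2))).congr_fun fun j => ?_
  have h : a j * (delay Q (a j) / a j) = delay Q (a j) := mul_div_cancel₀ _ (ha j)
  rw [sourceCoeff]
  linear_combination (-2 * (Q - ρ)) * h

theorem exists_hasSum_sourceCoeff_sq_ne (hQ : HasSum (fun j => a j ^ 2) (Q ^ 2)) (hQ0 : 0 < Q)
    (ha : ∀ j, a j ≠ 0) (haQ : ∀ j, a j ^ 2 < Q ^ 2) :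
    ∃ ρ, 0 ≤ ρ ∧ ρ ≠ Q ∧ HasSum (fun j => sourceCoeff Q ρ (a j) ^ 2) (ρ ^ 2) := by
  have h₀ := (hasSum_sourceCoeff_sq hQ hQ0 ha 0).nonneg fun _ => sq_nonneg _
  rw [sub_zero] at h₀
  obtain ⟨ρ, hρ, hρQ, hroot⟩ := exists_root_ne hQ0 (lt_tsum_delay hQ hQ0 ha haQ)
    (one_lt_tsum_delay_div_sq hQ hQ0 ha haQ) h₀
  exact ⟨ρ, hρ, hρQ, hroot ▸ hasSum_sourceCoeff_sq hQ hQ0 ha ρ⟩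

end Sums

section Hilbert

variable {H : Type*} [NormedAddCommGroup H] [InnerProductSpace ℝ H] {Q ρ : ℝ} {x : H}

theorem norm_smul_sub_eq {a : ℝ} {v : H} (hv : ‖v‖ = 1) (hρ : 0 ≤ ρ) (hx : ‖x‖ = ρ)
    (ha : a ≠ 0) (hc : ⟪v, x⟫ = sourceCoeff Q ρ a) : ‖a • v - x‖ = ρ + delay Q a := by
  rw [← pow_left_inj₀ (norm_nonneg _) (add_nonneg hρ delay_nonneg) two_ne_zero,
    norm_sub_sq_real, norm_smul, real_inner_smul_left, hc, hv, hx, Real.norm_eq_abs, mul_one,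
    sq_abs]
  linear_combination (-2) * mul_sourceCoeff (Q := Q) (ρ := ρ) ha - delay_sq_add_mul

theorem arrival_eq_of_hasSum {v : ℕ → H} (hv : Orthonormal ℝ v) {a : ℕ → ℝ}
    (ha : ∀ j, a j ≠ 0) {r : ℕ → H} (hr0 : r 0 = 0) (hr : ∀ j, r (j + 1) = a j • v j)
    {t : ℕ → ℝ} (ht0 : t 0 = 0) (ht : ∀ j, t (j + 1) = delay Q (a j)) (hρ : 0 ≤ ρ)
    (hx : HasSum (fun j => sourceCoeff Q ρ (a j) • v j) x)
    (hxρ : HasSum (fun j => sourceCoeff Q ρ (a j) ^ 2) (ρ ^ 2)) (k : ℕ) :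
    t k = -ρ + ‖r k - x‖ := by
  have hnorm : ‖x‖ = ρ :=
    (pow_left_inj₀ (norm_nonneg x) hρ two_ne_zero).mp ((hv.hasSum_sq_of_hasSum hx).unique hxρ)
  cases k with
  | zero => rw [ht0, hr0, zero_sub, norm_neg, hnorm, neg_add_cancel]
  | succ j =>
    rw [ht, hr, norm_smul_sub_eq (hv.1 j) hρ hnorm (ha j) (hv.inner_left_eq_of_hasSum hx j)]
    ring

end Hilbert

end SoundRanging

open SoundRanging

theorem sq_pi_div_sqrt_six : (Real.pi / √6) ^ 2 = Real.pi ^ 2 / 6 := by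
  rw [div_pow, Real.sq_sqrt (by norm_num)]

theorem hasSum_inv_succ_sq :
    HasSum (fun j : ℕ => (((j + 1 : ℕ) : ℝ)⁻¹) ^ 2) ((Real.pi / √6) ^ 2) := by
  have h := (hasSum_nat_add_iff' 1).mpr hasSum_zeta_two
  rw [sq_pi_div_sqrt_six]
  simpa using h

theorem srp_two_solutions_example_general
    {H : Type*} [NormedAddCommGroup H] [InnerProductSpace ℝ H] [CompleteSpace H]
    (e : ℕ → H)
    (he : Orthonormal ℝ (fun k : ℕ => e (k + 1)))
    (r : ℕ → H) (hr : ∀ k : ℕ, r k = ((k : ℝ)⁻¹) • e k)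
    (t : ℕ → ℝ) (ht0 : t 0 = 0)
    (ht : ∀ k : ℕ, 1 ≤ k →
      t k = -(Real.pi / Real.sqrt 6) + Real.sqrt (Real.pi ^ 2 / 6 + 3 / (k : ℝ) ^ 2))
    (s' : H) (hs' : s' = -∑' k : ℕ, ((k : ℝ)⁻¹) • e k)
    (t' : ℝ) (ht' : t' = -(Real.pi / Real.sqrt 6)) :
    (∀ k : ℕ, t k = t' + ‖r k - s'‖) ∧
      ∃ (s'' : H) (t'' : ℝ), (s'', t'') ≠ (s', t') ∧
        ∀ k : ℕ, t k = t'' + ‖r k - s''‖ := by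
  set Q := Real.pi / √6
  set a : ℕ → ℝ := fun j => ((j + 1 : ℕ) : ℝ)⁻¹
  have hQ : HasSum (fun j => a j ^ 2) (Q ^ 2) := hasSum_inv_succ_sq
  have hQ0 : 0 < Q := by positivity
  have ha j : a j ≠ 0 := by positivity
  have haQ j : a j ^ 2 < Q ^ 2 := by
    have h1 : a j ^ 2 ≤ 1 := pow_le_one₀ (by positivity) (inv_le_one_of_one_le₀ (by simp))
    have h2 : 1 < Q ^ 2 := by rw [sq_pi_div_sqrt_six]; nlinarith [Real.pi_gt_three]
    exact h1.trans_lt h2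
  have ht_delay j : t (j + 1) = delay Q (a j) := by
    rw [ht (j + 1) j.succ_pos, delay, sq_pi_div_sqrt_six, inv_pow, ← div_eq_mul_inv]
    ring
  have hsol {ρ x} := arrival_eq_of_hasSum (Q := Q) (ρ := ρ) (x := x) he ha (by simp [hr])
    (fun j => hr (j + 1)) ht0 ht_delay
  obtain ⟨u, hu⟩ := he.summable_smul hQ.summable
  have hs'u : s' = -u := by
    rw [hs', ((hasSum_nat_add_iff' 1).mp (by simpa [a] using hu)).tsum_eq]
  refine ⟨fun k => ?_, ?_⟩
  · rw [ht']
    refine hsol hQ0.le ?_ ?_ k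
    · simpa only [sourceCoeff_self, neg_smul, hs'u] using hu.neg
    · simpa only [sourceCoeff_self, neg_sq] using hQ
  · obtain ⟨ρ, hρ, hρQ, hρsum⟩ := exists_hasSum_sourceCoeff_sq_ne hQ hQ0 ha haQ
    obtain ⟨x, hx⟩ := he.summable_smul hρsum.summable
    refine ⟨x, -ρ, fun h => hρQ (neg_injective ((congrArg Prod.snd h).trans ht')), ?_⟩
    exact hsol hρ hx hρsum

/-- With sensors `r k = (1/k) • e k` (an orthonormal basis scaled) and the arrival
times generated by the source `s' = -∑ (1/k) e k` emitting at `t' = -π/√6`, the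
sound ranging problem has the solution `(s', t')` and also another, distinct
solution `(s'', t'')`. -/
theorem srp_two_solutions_example
    {H : Type*} [NormedAddCommGroup H] [InnerProductSpace ℝ H] [CompleteSpace H]
    (e : ℕ → H)
    (he : Orthonormal ℝ (fun k : ℕ => e (k + 1)))
    (hdense : Dense (Submodule.span ℝ (Set.range fun k : ℕ => e (k + 1)) : Set H))
    (r : ℕ → H) (hr : ∀ k : ℕ, r k = ((k : ℝ)⁻¹) • e k)
    (t : ℕ → ℝ) (ht0 : t 0 = 0)
    (ht : ∀ k : ℕ, 1 ≤ k →
      t k = -(Real.pi / Real.sqrt 6) + Real.sqrt (Real.pi ^ 2 / 6 + 3 / (k : ℝ) ^ 2))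
    (s' : H) (hs' : s' = -∑' k : ℕ, ((k : ℝ)⁻¹) • e k)
    (t' : ℝ) (ht' : t' = -(Real.pi / Real.sqrt 6)) :
    (∀ k : ℕ, t k = t' + ‖r k - s'‖) ∧
      ∃ (s'' : H) (t'' : ℝ), (s'', t'') ≠ (s', t') ∧
        ∀ k : ℕ, t k = t'' + ‖r k - s''‖ :=
  srp_two_solutions_example_general e he r hr t ht0 ht s' hs' t' ht'
end

section
/- Let (e k)_{k ≥ 1} be an orthonormal family in H whose linear span is dense (an orthonormal basis), let E = { x ∈ H : (1/2)·⟨e 1, x⟩² + Σ_{k ≥ 2} ⟨e k, x⟩² = 1 }, and set s' = −e 1, s'' = e 1. Then for every x ∈ E one has ‖x − s'‖ + ‖x − s''‖ = 2√2 (the set E is an 'ellipsoid' with focuses s' and s''). -/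
/-!
Parseval's identity for the basis gives `‖x‖² = a² + ∑_{k ≥ 2} ⟪e k, x⟫²` with `a = ⟪e 1, x⟫`,
so on `E` we have `‖x‖² = 1 + a²/2`. Then `‖x ± e 1‖² = 2 ± 2a + a²/2 = (2 ± a)²/2`, and since
`a² ≤ 2` both `2 ± a` are nonnegative, whence `‖x + e 1‖ + ‖x - e 1‖ = 4/√2 = 2√2`.
-/

open RealInnerProductSpace

section Parseval

variable {ι H : Type*} [NormedAddCommGroup H] [InnerProductSpace ℝ H] [CompleteSpace H]

theorem Orthonormal.hasSum_inner_sq_of_dense {v : ι → H} (hv : Orthonormal ℝ v)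
    (hdense : Dense (Submodule.span ℝ (Set.range v) : Set H)) (x : H) :
    HasSum (fun i => ⟪v i, x⟫ ^ 2) (‖x‖ ^ 2) := by
  have hsp : ⊤ ≤ (Submodule.span ℝ (Set.range v)).topologicalClosure :=
    (Submodule.dense_iff_topologicalClosure_eq_top.mp hdense).ge
  have h := (HilbertBasis.mk hv hsp).hasSum_inner_mul_inner x x
  rw [HilbertBasis.coe_mk, real_inner_self_eq_norm_sq] at h
  simpa only [real_inner_comm x, sq] using h

end Parseval

section Ellipse

variable {H : Type*} [NormedAddCommGroup H] [InnerProductSpace ℝ H]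

theorem sq_inner_le_two_of_norm_sq_eq {u x : H} (hu : ‖u‖ = 1)
    (hx : ‖x‖ ^ 2 = 1 + ⟪u, x⟫ ^ 2 / 2) : ⟪u, x⟫ ^ 2 ≤ 2 := by
  have hcs : ⟪u, x⟫ ^ 2 ≤ ‖x‖ ^ 2 := by
    rw [sq_le_sq, abs_norm]
    simpa only [hu, one_mul] using abs_real_inner_le_norm u x
  linarith

theorem norm_add_eq_of_norm_sq_eq {u x : H} (hu : ‖u‖ = 1)
    (hx : ‖x‖ ^ 2 = 1 + ⟪u, x⟫ ^ 2 / 2) : ‖x + u‖ = (2 + ⟪u, x⟫) / √2 := by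
  have ha := sq_inner_le_two_of_norm_sq_eq hu hx
  have hnonneg : 0 ≤ (2 + ⟪u, x⟫) / √2 := by
    apply div_nonneg _ (Real.sqrt_nonneg 2)
    nlinarith
  rw [← sq_eq_sq₀ (norm_nonneg _) hnonneg, norm_add_sq_real, hx, hu, div_pow,
    Real.sq_sqrt zero_le_two, real_inner_comm]
  ring

theorem norm_add_add_norm_sub_eq_two_mul_sqrt_two {u x : H} (hu : ‖u‖ = 1)
    (hx : ‖x‖ ^ 2 = 1 + ⟪u, x⟫ ^ 2 / 2) : ‖x + u‖ + ‖x - u‖ = 2 * √2 := by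
  have hx' : ‖x‖ ^ 2 = 1 + ⟪-u, x⟫ ^ 2 / 2 := by rwa [inner_neg_left, neg_sq]
  rw [sub_eq_add_neg, norm_add_eq_of_norm_sq_eq hu hx,
    norm_add_eq_of_norm_sq_eq (by rwa [norm_neg]) hx', inner_neg_left]
  field_simp
  rw [Real.sq_sqrt zero_le_two]
  ring

end Ellipse

/-- The 'ellipsoid' `E = {x : (1/2)⟪e 1, x⟫² + ∑_{k ≥ 2} ⟪e k, x⟫² = 1}` has
focuses `-e 1` and `e 1`: every `x ∈ E` satisfies
`‖x - (-e 1)‖ + ‖x - e 1‖ = 2√2`. -/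
theorem ellipsoid_focuses
    {H : Type*} [NormedAddCommGroup H] [InnerProductSpace ℝ H] [CompleteSpace H]
    (e : ℕ → H)
    (he : Orthonormal ℝ (fun k : ℕ => e (k + 1)))
    (hdense : Dense (Submodule.span ℝ (Set.range fun k : ℕ => e (k + 1)) : Set H))
    (x : H)
    (hx : (1 / 2) * ⟪e 1, x⟫ ^ 2 + ∑' k : ℕ, ⟪e (k + 2), x⟫ ^ 2 = 1) :
    ‖x - (-(e 1))‖ + ‖x - e 1‖ = 2 * Real.sqrt 2 := by
  have hparseval : ‖x‖ ^ 2 = ⟪e 1, x⟫ ^ 2 + ∑' k : ℕ, ⟪e (k + 2), x⟫ ^ 2 := by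
    have h := he.hasSum_inner_sq_of_dense hdense x
    rw [← h.tsum_eq, h.summable.tsum_eq_zero_add]
  rw [sub_neg_eq_add]
  exact norm_add_add_norm_sub_eq_two_mul_sqrt_two (he.1 0) (by linarith)
end

section
/- Let (e i)_{i ≥ 1} be an orthonormal family in H whose linear span is dense (an orthonormal basis). Then for every infinite subset S ⊆ {2, 3, 4, …} there is no pair (s, t) with s in the closed linear span of {e i : i ∈ S} such that 0 = t + ‖s‖ and √2 − 1 = t + ‖e i − s‖ for all i ∈ S. (The truncated sound ranging problem obtained by keeping only the sensors 0 and {e i : i ∈ S}, with the arrival times generated by the source e 1 emitting at time −1, has no solution inside the closed span of the kept sensors.) -/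
/-!
Since `t = -‖s‖`, every kept sensor `e i` lies at the same distance `√2 - 1 + ‖s‖`
from `s`. As the `e i` are unit vectors, `⟪e i, s⟫` is then the same number for all
`i ∈ S`; by Bessel's inequality the coefficients of `s` along infinitely many orthonormal
vectors are square-summable, so this constant is `0`. Thus `s` is orthogonal to every
kept sensor, hence to the closure of their span, which contains `s`, so `s = 0`, and the
equation for any `i ∈ S` becomes `√2 - 1 = 1`.
-/

open RealInnerProductSpace Submodule

section InnerProductSpace

variable {𝕜 E : Type*} [RCLike 𝕜] [NormedAddCommGroup E] [InnerProductSpace 𝕜 E]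

theorem Orthonormal.eq_zero_of_forall_inner_eq {ι : Type*} [Infinite ι] {v : ι → E}
    (hv : Orthonormal 𝕜 v) {x : E} {a : 𝕜} (h : ∀ i, inner 𝕜 (v i) x = a) : a = 0 := by
  simpa [h, summable_const_iff] using hv.inner_products_summable x

theorem eq_zero_of_mem_closure_span_of_forall_inner_eq_zero {s : Set E} {x : E}
    (hx : x ∈ closure (span 𝕜 s : Set E)) (h : ∀ y ∈ s, inner 𝕜 y x = 0) : x = 0 := by
  have hle : span 𝕜 s ≤ (𝕜 ∙ x)ᗮ :=
    span_le.mpr fun y hy => mem_orthogonal_singleton_iff_inner_left.mpr (h y hy)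
  have hxx : x ∈ (𝕜 ∙ x)ᗮ := closure_minimal hle (isClosed_orthogonal _) hx
  exact inner_self_eq_zero.mp (mem_orthogonal_singleton_iff_inner_right.mp hxx)

end InnerProductSpace

theorem real_inner_eq_of_norm_eq_one_of_norm_sub_eq {F : Type*} [NormedAddCommGroup F]
    [InnerProductSpace ℝ F] {v s : F} {d : ℝ} (hv : ‖v‖ = 1) (hd : ‖v - s‖ = d) :
    ⟪v, s⟫ = (1 + ‖s‖ ^ 2 - d ^ 2) / 2 := by
  have := norm_sub_sq_real v s
  rw [hv, hd] at this
  linarith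

theorem srp_truncated_no_solution_general
    {H : Type*} [NormedAddCommGroup H] [InnerProductSpace ℝ H]
    (e : ℕ → H)
    (he : Orthonormal ℝ (fun i : ℕ => e (i + 1)))
    (S : Set ℕ) (hS2 : ∀ i ∈ S, 2 ≤ i) (hSinf : S.Infinite) :
    ¬ ∃ (s : H) (t : ℝ),
        s ∈ closure (Submodule.span ℝ (e '' S) : Set H) ∧
        0 = t + ‖s‖ ∧
        ∀ i ∈ S, Real.sqrt 2 - 1 = t + ‖e i - s‖ := by
  rintro ⟨s, t, hs, h0, hdist⟩
  have hshift : ∀ i ∈ S, i - 1 + 1 = i := fun i hi => by have := hS2 i hi; omega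
  have horth : Orthonormal ℝ (fun i : S => e i) := by
    have := he.comp (fun i : S => (i : ℕ) - 1) fun i j (hij : (i : ℕ) - 1 = j - 1) => by
      have := hshift i i.2; have := hshift j j.2; ext; omega
    simpa only [Function.comp_def, hshift _ (Subtype.prop _)] using this
  have hunit : ∀ i ∈ S, ‖e i‖ = 1 := fun i hi => horth.1 ⟨i, hi⟩
  have : Infinite S := hSinf.to_subtype
  have hinner : ∀ i ∈ S, ⟪e i, s⟫ = (1 + ‖s‖ ^ 2 - (Real.sqrt 2 - 1 - t) ^ 2) / 2 :=
    fun i hi => real_inner_eq_of_norm_eq_one_of_norm_sub_eq (hunit i hi) (by linarith [hdist i hi])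
  have hconst := horth.eq_zero_of_forall_inner_eq fun i : S => hinner i i.2
  have hs0 : s = 0 := eq_zero_of_mem_closure_span_of_forall_inner_eq_zero hs <| by
    rintro _ ⟨i, hi, rfl⟩
    exact (hinner i hi).trans hconst
  obtain ⟨i, hi⟩ := hSinf.nonempty
  have hdist_i := hdist i hi
  rw [hs0, sub_zero, hunit i hi] at hdist_i
  rw [hs0, norm_zero] at h0
  have : Real.sqrt 2 < 2 := by rw [Real.sqrt_lt' two_pos]; norm_num
  linarith

/-- The truncated sound ranging problem obtained by keeping only the sensors `0`
and `{e i : i ∈ S}` (with `S ⊆ {2, 3, ...}` infinite), with arrival times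
generated by the source `e 1` emitting at time `-1`, has no solution inside the
closed span of the kept sensors. -/
theorem srp_truncated_no_solution
    {H : Type*} [NormedAddCommGroup H] [InnerProductSpace ℝ H] [CompleteSpace H]
    (e : ℕ → H)
    (he : Orthonormal ℝ (fun i : ℕ => e (i + 1)))
    (hdense : Dense (Submodule.span ℝ (Set.range fun i : ℕ => e (i + 1)) : Set H))
    (S : Set ℕ) (hS2 : ∀ i ∈ S, 2 ≤ i) (hSinf : S.Infinite) :
    ¬ ∃ (s : H) (t : ℝ),
        s ∈ closure (Submodule.span ℝ (e '' S) : Set H) ∧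
        0 = t + ‖s‖ ∧
        ∀ i ∈ S, Real.sqrt 2 - 1 = t + ‖e i - s‖ :=
  srp_truncated_no_solution_general e he S hS2 hSinf
end

section
/- For any vectors x, y, z in a real inner product space with ‖x‖ = ‖y‖ = ‖z‖ = 1, the inequality ⟨x, y⟩² + ⟨y, z⟩² + ⟨x, z⟩² ≤ 1 + 2·⟨x, y⟩·⟨y, z⟩·⟨x, z⟩ holds. -/
open RealInnerProductSpace

/-! The left side minus the right side is minus the Gram determinant of `x, y, z`. Projecting `y`
and `z` onto the orthogonal complement of `x` and applying Cauchy–Schwarz there shows that this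
determinant is nonnegative. -/

section OrthogonalToUnit

variable {V : Type*} [NormedAddCommGroup V] [InnerProductSpace ℝ V] {x : V}

lemma inner_sub_inner_smul_of_norm_eq_one (hx : ‖x‖ = 1) (y z : V) :
    ⟪y - ⟪x, y⟫ • x, z - ⟪x, z⟫ • x⟫ = ⟪y, z⟫ - ⟪x, y⟫ * ⟪x, z⟫ := by
  have hxx : ⟪x, x⟫ = 1 := by rw [real_inner_self_eq_norm_sq, hx, one_pow]
  simp only [inner_sub_left, inner_sub_right, real_inner_smul_left, real_inner_smul_right, hxx,
    real_inner_comm y x]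
  ring

lemma sq_inner_sub_mul_inner_le_of_norm_eq_one (hx : ‖x‖ = 1) (y z : V) :
    (⟪y, z⟫ - ⟪x, y⟫ * ⟪x, z⟫) ^ 2 ≤ (‖y‖ ^ 2 - ⟪x, y⟫ ^ 2) * (‖z‖ ^ 2 - ⟪x, z⟫ ^ 2) := by
  have hcs := real_inner_mul_inner_self_le (y - ⟪x, y⟫ • x) (z - ⟪x, z⟫ • x)
  rwa [inner_sub_inner_smul_of_norm_eq_one hx, inner_sub_inner_smul_of_norm_eq_one hx,
    inner_sub_inner_smul_of_norm_eq_one hx, real_inner_self_eq_norm_sq, real_inner_self_eq_norm_sq,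
    ← sq, ← sq, ← sq] at hcs

end OrthogonalToUnit

/-- For unit vectors `x, y, z` in a real inner product space,
`⟪x,y⟫² + ⟪y,z⟫² + ⟪x,z⟫² ≤ 1 + 2 ⟪x,y⟫ ⟪y,z⟫ ⟪x,z⟫`. -/
theorem triple_inner_inequality
    {V : Type*} [NormedAddCommGroup V] [InnerProductSpace ℝ V]
    (x y z : V) (hx : ‖x‖ = 1) (hy : ‖y‖ = 1) (hz : ‖z‖ = 1) :
    ⟪x, y⟫ ^ 2 + ⟪y, z⟫ ^ 2 + ⟪x, z⟫ ^ 2 ≤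
      1 + 2 * (⟪x, y⟫ * ⟪y, z⟫ * ⟪x, z⟫) := by
  have h := sq_inner_sub_mul_inner_le_of_norm_eq_one hx y z
  rw [hy, hz] at h
  linarith
end

section
/- Let R ⊆ H be a set of sensors, let u lie in the closure of the linear span of R, let h and w be unit vectors each orthogonal to every element of R and with ⟨h, w⟩ = 0, and let ρ > 0. Define s(φ) = u + ρ·(cos φ · h + sin φ · w) for φ ∈ ℝ. Then for every r ∈ R and every φ ∈ ℝ: ‖r − s(φ)‖ = ‖r − (u + ρ·h)‖. Hence if the source u + ρ·h emitting at time t_e produces arrival times t_r = t_e + ‖r − (u + ρ·h)‖, then every pair (s(φ), t_e) is also a solution of the sound ranging problem: a continuum of distinct solutions. -/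
open RealInnerProductSpace

/-! Orthogonality to the sensors passes to the closed span, so `r - u` is orthogonal to the
plane of `h` and `w`. By Pythagoras, `‖r - s(φ)‖² = ‖r - u‖² + ‖s(φ) - u‖²`, and
`‖s(φ) - u‖ = ρ` for every `φ`. -/

lemma inner_eq_zero_of_mem_closure_span {𝕜 H : Type*} [RCLike 𝕜] [NormedAddCommGroup H]
    [InnerProductSpace 𝕜 H] {R : Set H} {v u : H} (hvR : ∀ r ∈ R, inner 𝕜 v r = 0)
    (hu : u ∈ closure (Submodule.span 𝕜 R : Set H)) : inner 𝕜 v u = 0 := by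
  have hspan : (Submodule.span 𝕜 R : Set H) ⊆ (𝕜 ∙ v)ᗮ :=
    Submodule.span_le.2 fun r hr ↦ Submodule.mem_orthogonal_singleton_iff_inner_right.2 (hvR r hr)
  exact Submodule.mem_orthogonal_singleton_iff_inner_right.1
    (closure_minimal hspan (𝕜 ∙ v).isClosed_orthogonal hu)

lemma norm_sub_eq_norm_sub_of_inner_eq_zero {H : Type*} [NormedAddCommGroup H]
    [InnerProductSpace ℝ H] {x c d : H} (hc : ⟪x, c⟫ = 0) (hd : ⟪x, d⟫ = 0)
    (hcd : ‖c‖ = ‖d‖) : ‖x - c‖ = ‖x - d‖ := by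
  refine (mul_self_inj_of_nonneg (norm_nonneg _) (norm_nonneg _)).1 ?_
  rw [norm_sub_sq_eq_norm_sq_add_norm_sq_real hc, norm_sub_sq_eq_norm_sq_add_norm_sq_real hd, hcd]

lemma norm_cos_smul_add_sin_smul {H : Type*} [NormedAddCommGroup H] [InnerProductSpace ℝ H]
    {h w : H} (hh : ‖h‖ = 1) (hw : ‖w‖ = 1) (hhw : ⟪h, w⟫ = 0) (φ : ℝ) :
    ‖Real.cos φ • h + Real.sin φ • w‖ = 1 := by
  have horth : ⟪Real.cos φ • h, Real.sin φ • w⟫ = 0 := by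
    rw [real_inner_smul_left, real_inner_smul_right, hhw, mul_zero, mul_zero]
  refine (mul_self_inj_of_nonneg (norm_nonneg _) zero_le_one).1 ?_
  rw [norm_add_sq_eq_norm_sq_add_norm_sq_real horth, norm_smul, norm_smul, hh, hw,
    Real.norm_eq_abs, Real.norm_eq_abs, mul_one, mul_one, abs_mul_abs_self, abs_mul_abs_self,
    ← sq, ← sq, Real.cos_sq_add_sin_sq, one_mul]

theorem srp_continuum_of_solutions_general
    {H : Type*} [NormedAddCommGroup H] [InnerProductSpace ℝ H]
    (R : Set H) (u h w : H)
    (hu : u ∈ closure (Submodule.span ℝ R : Set H))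
    (hh : ‖h‖ = 1) (hw : ‖w‖ = 1) (hhw : ⟪h, w⟫ = 0)
    (hhR : ∀ r ∈ R, ⟪h, r⟫ = 0) (hwR : ∀ r ∈ R, ⟪w, r⟫ = 0)
    (ρ : ℝ) :
    ∀ r ∈ R, ∀ φ : ℝ,
      ‖r - (u + ρ • (Real.cos φ • h + Real.sin φ • w))‖ = ‖r - (u + ρ • h)‖ := by
  intro r hr φ
  have hperp : ∀ v : H, (∀ r ∈ R, ⟪v, r⟫ = 0) → ⟪r - u, v⟫ = 0 := fun v hvR ↦ by
    rw [real_inner_comm, inner_sub_right, hvR r hr, inner_eq_zero_of_mem_closure_span hvR hu,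
      sub_zero]
  rw [← sub_sub, ← sub_sub]
  refine norm_sub_eq_norm_sub_of_inner_eq_zero ?_ ?_ ?_
  · rw [real_inner_smul_right, inner_add_right, real_inner_smul_right, real_inner_smul_right,
      hperp h hhR, hperp w hwR]
    ring
  · rw [real_inner_smul_right, hperp h hhR, mul_zero]
  · rw [norm_smul, norm_smul, norm_cos_smul_add_sin_smul hh hw hhw, hh]

/-- If the source lies off the closed span of the sensors plus two extra
orthogonal directions `h, w`, then rotating the source in the `(h, w)`-plane does
not change its distance to any sensor: a continuum of indistinguishable source
positions. -/
theorem srp_continuum_of_solutions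
    {H : Type*} [NormedAddCommGroup H] [InnerProductSpace ℝ H] [CompleteSpace H]
    (R : Set H) (u h w : H)
    (hu : u ∈ closure (Submodule.span ℝ R : Set H))
    (hh : ‖h‖ = 1) (hw : ‖w‖ = 1) (hhw : ⟪h, w⟫ = 0)
    (hhR : ∀ r ∈ R, ⟪h, r⟫ = 0) (hwR : ∀ r ∈ R, ⟪w, r⟫ = 0)
    (ρ : ℝ) (hρ : 0 < ρ) :
    ∀ r ∈ R, ∀ φ : ℝ,
      ‖r - (u + ρ • (Real.cos φ • h + Real.sin φ • w))‖ = ‖r - (u + ρ • h)‖ :=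
  srp_continuum_of_solutions_general R u h w hu hh hw hhw hhR hwR ρ
end

section
/- Let R be a set of unit vectors in H, let s₀ with ‖s₀‖ = 1 decompose as s₀ = u₀ + u₁ where u₀ lies in the closure of the linear span of R, u₁ is orthogonal to every element of R and u₁ ≠ 0, and let u₂ be a unit vector orthogonal to every element of R and to u₁. Define s(φ) = u₀ + ‖u₁‖·(cos φ · (u₁/‖u₁‖) + sin φ · u₂) for φ ∈ ℝ. Then for every φ: ‖s(φ)‖ = 1 and for every r ∈ R, ⟨r, s(φ)⟩ = ⟨r, s₀⟩, hence arccos⟨r, s(φ)⟩ = arccos⟨r, s₀⟩; so the sound ranging problem on the unit sphere with geodesic distance d(x, y) = arccos⟨x, y⟩ has a continuum of solutions s(φ). -/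
open RealInnerProductSpace

/-! The sensors span a subspace `K`; `u₀ ∈ closure K` is orthogonal to `Kᗮ`, which contains `u₁`
and every rotated vector `w = ‖u₁‖ • (cos φ • u₁/‖u₁‖ + sin φ • u₂)`. Hence replacing `u₁` by `w`
changes neither the inner products with the sensors nor, by Pythagoras, the norm. -/

section

variable {F : Type*} [NormedAddCommGroup F] [InnerProductSpace ℝ F]

theorem mem_orthogonal_span_of_forall_inner_eq_zero {R : Set F} {v : F}
    (h : ∀ r ∈ R, ⟪r, v⟫ = 0) : v ∈ (Submodule.span ℝ R)ᗮ :=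
  (Submodule.mem_orthogonal _ v).2 fun u hu => by
    induction hu using Submodule.span_induction with
    | mem r hr => exact h r hr
    | zero => exact inner_zero_left _
    | add x y _ _ hx hy => rw [inner_add_left, hx, hy, add_zero]
    | smul c x _ hx => rw [real_inner_smul_left, hx, mul_zero]

theorem inner_eq_zero_of_mem_closure_of_mem_orthogonal {K : Submodule ℝ F} {u v : F}
    (hu : u ∈ closure (K : Set F)) (hv : v ∈ Kᗮ) : ⟪u, v⟫ = 0 :=
  Submodule.inner_right_of_mem_orthogonal (K := K.topologicalClosure)
    (by rwa [← SetLike.mem_coe, Submodule.topologicalClosure_coe])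
    (by rwa [Submodule.orthogonal_closure])

theorem norm_cos_smul_add_sin_smul_s15 {x y : F} (hx : ‖x‖ = 1) (hy : ‖y‖ = 1) (hxy : ⟪x, y⟫ = 0)
    (φ : ℝ) : ‖Real.cos φ • x + Real.sin φ • y‖ = 1 := by
  have hsq : ‖Real.cos φ • x + Real.sin φ • y‖ ^ 2 = 1 := by
    rw [norm_add_sq_real, real_inner_smul_left, real_inner_smul_right, hxy, norm_smul, norm_smul,
      hx, hy, Real.norm_eq_abs, Real.norm_eq_abs]
    nlinarith [Real.sin_sq_add_cos_sq φ, sq_abs (Real.sin φ), sq_abs (Real.cos φ)]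
  exact (pow_eq_one_iff_of_nonneg (norm_nonneg _) two_ne_zero).1 hsq

theorem norm_add_eq_norm_add_of_inner_eq_zero {x y z : F} (hy : ⟪x, y⟫ = 0) (hz : ⟪x, z⟫ = 0)
    (h : ‖y‖ = ‖z‖) : ‖x + y‖ = ‖x + z‖ :=
  (mul_self_inj (norm_nonneg _) (norm_nonneg _)).1 <| by
    rw [norm_add_sq_eq_norm_sq_add_norm_sq_real hy, norm_add_sq_eq_norm_sq_add_norm_sq_real hz, h]

end

theorem srp_sphere_continuum_of_solutions_general
    {H : Type*} [NormedAddCommGroup H] [InnerProductSpace ℝ H]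
    (R : Set H)
    (s₀ u₀ u₁ u₂ : H)
    (hs₀ : s₀ = u₀ + u₁) (hs₀norm : ‖s₀‖ = 1)
    (hu₀ : u₀ ∈ closure (Submodule.span ℝ R : Set H))
    (hu₁R : ∀ r ∈ R, ⟪r, u₁⟫ = 0) (hu₁ : u₁ ≠ 0)
    (hu₂ : ‖u₂‖ = 1) (hu₂R : ∀ r ∈ R, ⟪r, u₂⟫ = 0) (hu₁₂ : ⟪u₁, u₂⟫ = 0) :
    ∀ φ : ℝ,
      ‖u₀ + ‖u₁‖ • (Real.cos φ • (‖u₁‖⁻¹ • u₁) + Real.sin φ • u₂)‖ = 1 ∧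
      ∀ r ∈ R,
        ⟪r, u₀ + ‖u₁‖ • (Real.cos φ • (‖u₁‖⁻¹ • u₁) + Real.sin φ • u₂)⟫ = ⟪r, s₀⟫ ∧
        Real.arccos ⟪r, u₀ + ‖u₁‖ • (Real.cos φ • (‖u₁‖⁻¹ • u₁) + Real.sin φ • u₂)⟫
          = Real.arccos ⟪r, s₀⟫ := by
  intro φ
  set K := Submodule.span ℝ R
  set w := ‖u₁‖ • (Real.cos φ • (‖u₁‖⁻¹ • u₁) + Real.sin φ • u₂)
  have hu₁K : u₁ ∈ Kᗮ := mem_orthogonal_span_of_forall_inner_eq_zero hu₁R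
  have hwK : w ∈ Kᗮ := Submodule.smul_mem _ _ <| add_mem
    (Submodule.smul_mem _ _ (Submodule.smul_mem _ _ hu₁K))
    (Submodule.smul_mem _ _ (mem_orthogonal_span_of_forall_inner_eq_zero hu₂R))
  have he : ‖‖u₁‖⁻¹ • u₁‖ = 1 := by simpa using norm_smul_inv_norm (𝕜 := ℝ) hu₁
  have hw : ‖w‖ = ‖u₁‖ := by
    rw [norm_smul, norm_norm, norm_cos_smul_add_sin_smul_s15 he hu₂
      (by rw [real_inner_smul_left, hu₁₂, mul_zero]), mul_one]
  have hinner (r : H) (hr : r ∈ R) : ⟪r, u₀ + w⟫ = ⟪r, s₀⟫ := by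
    rw [hs₀, inner_add_right, inner_add_right, hu₁R r hr,
      Submodule.inner_right_of_mem_orthogonal (Submodule.subset_span hr) hwK]
  refine ⟨?_, fun r hr => ⟨hinner r hr, by rw [hinner r hr]⟩⟩
  rw [← hs₀norm, hs₀]
  exact norm_add_eq_norm_add_of_inner_eq_zero
    (inner_eq_zero_of_mem_closure_of_mem_orthogonal hu₀ hwK)
    (inner_eq_zero_of_mem_closure_of_mem_orthogonal hu₀ hu₁K) hw

/-- On the unit sphere with geodesic distance: if the source `s₀ = u₀ + u₁` has a
nonzero component `u₁` orthogonal to all sensors, and `u₂` is a unit vector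
orthogonal to all sensors and to `u₁`, then rotating in the `(u₁, u₂)`-plane
yields a continuum of unit vectors at the same geodesic distance from every
sensor. -/
theorem srp_sphere_continuum_of_solutions
    {H : Type*} [NormedAddCommGroup H] [InnerProductSpace ℝ H] [CompleteSpace H]
    (R : Set H) (hR : ∀ r ∈ R, ‖r‖ = 1)
    (s₀ u₀ u₁ u₂ : H)
    (hs₀ : s₀ = u₀ + u₁) (hs₀norm : ‖s₀‖ = 1)
    (hu₀ : u₀ ∈ closure (Submodule.span ℝ R : Set H))
    (hu₁R : ∀ r ∈ R, ⟪r, u₁⟫ = 0) (hu₁ : u₁ ≠ 0)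
    (hu₂ : ‖u₂‖ = 1) (hu₂R : ∀ r ∈ R, ⟪r, u₂⟫ = 0) (hu₁₂ : ⟪u₁, u₂⟫ = 0) :
    ∀ φ : ℝ,
      ‖u₀ + ‖u₁‖ • (Real.cos φ • (‖u₁‖⁻¹ • u₁) + Real.sin φ • u₂)‖ = 1 ∧
      ∀ r ∈ R,
        ⟪r, u₀ + ‖u₁‖ • (Real.cos φ • (‖u₁‖⁻¹ • u₁) + Real.sin φ • u₂)⟫ = ⟪r, s₀⟫ ∧
        Real.arccos ⟪r, u₀ + ‖u₁‖ • (Real.cos φ • (‖u₁‖⁻¹ • u₁) + Real.sin φ • u₂)⟫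
          = Real.arccos ⟪r, s₀⟫ :=
  srp_sphere_continuum_of_solutions_general R s₀ u₀ u₁ u₂ hs₀ hs₀norm hu₀ hu₁R hu₁ hu₂ hu₂R hu₁₂
end

section
/- Let b, c : ℕ → ℝ be real sequences such that Σⱼ bⱼ² diverges, and let z₀ ∈ ℝ be such that the series Σⱼ (cⱼ + z₀·bⱼ)² converges with sum equal to 1. Then the sequence zₙ = −(Σ_{j=1}^{n} bⱼ·cⱼ) / (Σ_{j=1}^{n} bⱼ²) (defined for all n with Σ_{j=1}^{n} bⱼ² > 0) converges to z₀ as n → ∞. -/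
/-!
Put `d j = c j + z₀ b j`, so that `Σ d²` converges. Then `zₙ - z₀ = -(Σ_{j<n} bⱼ dⱼ) / Bₙ`
with `Bₙ = Σ_{j<n} bⱼ²`, and Cauchy–Schwarz bounds this by `√(Σ d² / Bₙ)`, which tends to `0`
because `Bₙ → ∞`.
-/

open Filter Finset Topology

lemma sq_sum_mul_le_sum_sq_mul_tsum_sq {u v : ℕ → ℝ} (hv : Summable fun j => v j ^ 2) (n : ℕ) :
    (∑ j ∈ range n, u j * v j) ^ 2 ≤ (∑ j ∈ range n, u j ^ 2) * ∑' j, v j ^ 2 :=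
  (sum_mul_sq_le_sq_mul_sq _ _ _).trans <|
    mul_le_mul_of_nonneg_left (hv.sum_le_tsum _ fun j _ => sq_nonneg (v j))
      (sum_nonneg fun j _ => sq_nonneg (u j))

lemma tendsto_sum_mul_div_sum_sq_zero {u v : ℕ → ℝ} (hu : ¬Summable fun j => u j ^ 2)
    (hv : Summable fun j => v j ^ 2) :
    Tendsto (fun n => (∑ j ∈ range n, u j * v j) / ∑ j ∈ range n, u j ^ 2) atTop (𝓝 0) := by
  set B : ℕ → ℝ := fun n => ∑ j ∈ range n, u j ^ 2
  set V := ∑' j, v j ^ 2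
  have hB : Tendsto B atTop atTop :=
    (not_summable_iff_tendsto_nat_atTop_of_nonneg fun j => sq_nonneg (u j)).mp hu
  have hbound : ∀ n, ‖(∑ j ∈ range n, u j * v j) / B n‖ ≤ √(V / B n) := by
    intro n
    rw [Real.norm_eq_abs, ← Real.sqrt_sq_eq_abs]
    refine Real.sqrt_le_sqrt ?_
    have hB0 : 0 ≤ B n := sum_nonneg fun j _ => sq_nonneg (u j)
    rcases hB0.eq_or_lt with hBn | hBn
    · rw [← hBn, div_zero, div_zero, sq, zero_mul]
    rw [div_pow, div_le_div_iff₀ (by positivity) hBn, pow_two (B n), ← mul_assoc]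
    exact mul_le_mul_of_nonneg_right
      ((sq_sum_mul_le_sum_sq_mul_tsum_sq hv n).trans_eq (mul_comm _ _)) hBn.le
  have hsqrt : Tendsto (fun n => √(V / B n)) atTop (𝓝 0) := by
    simpa using (tendsto_const_nhds.div_atTop hB).sqrt
  exact squeeze_zero_norm hbound hsqrt

lemma neg_sum_mul_div_sum_sq_eq_sub {b c : ℕ → ℝ} (z₀ : ℝ) {n : ℕ}
    (hB : ∑ j ∈ range n, b j ^ 2 ≠ 0) :
    -(∑ j ∈ range n, b j * c j) / ∑ j ∈ range n, b j ^ 2 =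
      z₀ - (∑ j ∈ range n, b j * (c j + z₀ * b j)) / ∑ j ∈ range n, b j ^ 2 := by
  have hsum : ∑ j ∈ range n, b j * (c j + z₀ * b j) =
      ∑ j ∈ range n, b j * c j + z₀ * ∑ j ∈ range n, b j ^ 2 := by
    rw [mul_sum, ← sum_add_distrib]
    exact sum_congr rfl fun j _ => by ring
  rw [hsum]
  field_simp
  ring

/-- Subcase 1a: if `Σ bⱼ²` diverges and `Σ (cⱼ + z₀ bⱼ)² = 1`, then the vertices
`zₙ = -(Σ_{j<n} bⱼ cⱼ)/(Σ_{j<n} bⱼ²)` of the partial-sum quadratics converge to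
`z₀`. -/
theorem subcase1a_vertex_converges
    (b c : ℕ → ℝ) (hb : ¬ Summable (fun j => (b j) ^ 2))
    (z₀ : ℝ) (h₀ : HasSum (fun j => (c j + z₀ * b j) ^ 2) 1) :
    Filter.Tendsto
      (fun n : ℕ =>
        -(∑ j ∈ Finset.range n, b j * c j) / (∑ j ∈ Finset.range n, (b j) ^ 2))
      Filter.atTop (nhds z₀) := by
  have hB : Tendsto (fun n => ∑ j ∈ range n, b j ^ 2) atTop atTop :=
    (not_summable_iff_tendsto_nat_atTop_of_nonneg fun j => sq_nonneg (b j)).mp hb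
  have hvertex : ∀ᶠ n in atTop,
      z₀ - (∑ j ∈ range n, b j * (c j + z₀ * b j)) / ∑ j ∈ range n, b j ^ 2 =
        -(∑ j ∈ range n, b j * c j) / ∑ j ∈ range n, b j ^ 2 := by
    filter_upwards [hB.eventually_gt_atTop 0] with n hn
    exact (neg_sum_mul_div_sum_sq_eq_sub z₀ hn.ne').symm
  simpa using (tendsto_const_nhds.sub (tendsto_sum_mul_div_sum_sq_zero hb h₀.summable)).congr'
    hvertex
end

section
/- Let p, q : ℕ → ℝ be real sequences such that the series Σⱼ pⱼ² diverges, and let t', t'' ∈ ℝ with sin(t' − t'') ≠ 0. Then it is impossible that both series Σⱼ (pⱼ·cos t' + qⱼ·sin t')² and Σⱼ (pⱼ·cos t'' + qⱼ·sin t'')² converge. (In Case 2 of sound ranging on the sphere, at most one emission time in an interval of length ≤ π makes the master series converge.) -/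
/-! The angles `t'` and `t''` give two linear forms in `(pⱼ, qⱼ)` which are independent
exactly when `sin (t' - t'') ≠ 0`; eliminating `qⱼ` writes `sin (t' - t'') · pⱼ` as a fixed
linear combination of the two forms. Square-summable sequences form a vector space, so if
both master series converge then so does `Σ pⱼ²`. -/

open Real

theorem Summable.sq_add {ι : Type*} {f g : ι → ℝ} (hf : Summable fun i => f i ^ 2)
    (hg : Summable fun i => g i ^ 2) : Summable fun i => (f i + g i) ^ 2 :=
  ((hf.add hg).mul_left 2).of_nonneg_of_le (fun _ => sq_nonneg _)
    fun _ => add_sq_le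

theorem Summable.sq_const_mul {ι : Type*} {f : ι → ℝ} (hf : Summable fun i => f i ^ 2)
    (c : ℝ) : Summable fun i => (c * f i) ^ 2 := by
  simpa only [mul_pow] using hf.mul_left (c ^ 2)

theorem Summable.sq_linear_combination {ι : Type*} {f g : ι → ℝ}
    (hf : Summable fun i => f i ^ 2) (hg : Summable fun i => g i ^ 2) (a b : ℝ) :
    Summable fun i => (a * f i + b * g i) ^ 2 :=
  (hf.sq_const_mul a).sq_add (hg.sq_const_mul b)

theorem Real.sin_sub_mul_eq (x y t' t'' : ℝ) :
    sin (t' - t'') * x =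
      sin t' * (x * cos t'' + y * sin t'') + -sin t'' * (x * cos t' + y * sin t') := by
  rw [sin_sub]
  ring

/-- Case 2 on the sphere: if `Σ pⱼ²` diverges and `sin (t' - t'') ≠ 0`, then the
master series cannot converge at both `t'` and `t''`. -/
theorem sphere_case2_unique_t
    (p q : ℕ → ℝ) (hp : ¬ Summable (fun j => (p j) ^ 2))
    (t' t'' : ℝ) (hsin : Real.sin (t' - t'') ≠ 0) :
    ¬ (Summable (fun j => (p j * Real.cos t' + q j * Real.sin t') ^ 2) ∧
       Summable (fun j => (p j * Real.cos t'' + q j * Real.sin t'') ^ 2)) := by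
  rintro ⟨h', h''⟩
  have hscaled : Summable fun j => sin (t' - t'') ^ 2 * p j ^ 2 := by
    simpa only [← mul_pow, ← sin_sub_mul_eq (p _) (q _)] using
      h''.sq_linear_combination h' (sin t') (-sin t'')
  exact hp ((summable_mul_left_iff (pow_ne_zero 2 hsin)).1 hscaled)
end
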